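/- arXiv:1912.06438 — 2 statements merged into one kernel-verified Lean document; each statement's English description precedes it below -/
import Mathlib

section
/- (Lichnerowicz estimate for spectrally positive curvature) Let G be a finite connected weighted graph satisfying CD(ρ, n) for some function ρ : V → ℝ and n ∈ (0, ∞], and suppose (1/2)L + ρ ≥ K > 0 as quadratic forms on ℓ²(V, m). Then every nonzero eigenvalue λ of the Laplacian L satisfies λ ≥ K. -/
open Real ENNReal

structure WGraph (V : Type*) where
  w : V → V → ℝ
  m : V → ℝ
  symm : ∀ x y, w x y = w y x
  nonneg : ∀ x y, 0 ≤ w x y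
  loopless : ∀ x, w x x = 0
  mpos : ∀ x, 0 < m x
  locFin : ∀ x, (Function.support (w x)).Finite

namespace WGraph

variable {V : Type*} (G : WGraph V)

/-- transition weights -/
noncomputable def q (x y : V) : ℝ := G.w x y / G.m x

/-- the graph Laplacian `Δ` -/
noncomputable def lap (f : V → ℝ) (x : V) : ℝ := ∑' y, G.q x y * (f y - f x)

/-- the weighted vertex degree -/
noncomputable def deg (x : V) : ℝ := ∑' y, G.q x y

/-- the bilinear carré du champ operator `Γ(f,g)` -/
noncomputable def gammaB (f g : V → ℝ) (x : V) : ℝ :=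
  (1 / 2) * (G.lap (f * g) x - f x * G.lap g x - g x * G.lap f x)

/-- the carré du champ operator `Γ f` -/
noncomputable def gamma (f : V → ℝ) : V → ℝ := G.gammaB f f

/-- the iterated carré du champ operator `Γ₂ f` -/
noncomputable def gamma2 (f : V → ℝ) (x : V) : ℝ :=
  (1 / 2) * G.lap (G.gamma f) x - G.gammaB f (G.lap f) x

/-- boundedness of a function -/
def Bdd (f : V → ℝ) : Prop := ∃ C, ∀ x, |f x| ≤ C

/-- the variable curvature dimension condition `CD(ρ,n)` -/
def CD (ρ : V → ℝ) (n : ℝ≥0∞) : Prop :=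
  ∀ f, Bdd f → ∀ x, ρ x * G.gamma f x + (n⁻¹).toReal * (G.lap f x) ^ 2 ≤ G.gamma2 f x

/-- the underlying simple graph (for the combinatorial metric) -/
def toSimpleGraph : SimpleGraph V where
  Adj x y := 0 < G.w x y
  symm := by constructor; intro x y h; rwa [G.symm] at h
  loopless := by constructor; intro x h; rw [G.loopless] at h; exact lt_irrefl 0 h

/-- `P` is the semigroup `e^{-t(L+W)}` generated by `-(L+W) = Δ - W`. -/
def IsSemigroup (W : V → ℝ) (P : ℝ → (V → ℝ) → V → ℝ) : Prop :=
  (∀ f, P 0 f = f) ∧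
  (∀ s t, 0 ≤ s → 0 ≤ t → ∀ f, P (s + t) f = P s (P t f)) ∧
  (∀ t f g, P t (f + g) = P t f + P t g) ∧
  (∀ t (c : ℝ) f, P t (c • f) = c • P t f) ∧
  (∀ f, Bdd f → ∀ t, 0 ≤ t → Bdd (P t f)) ∧
  (∀ f, Bdd f → ∀ x, ContinuousOn (fun s => P s f x) (Set.Ici 0)) ∧
  (∀ f, Bdd f → ∀ x t, 0 < t →
    HasDerivAt (fun s => P s f x) (G.lap (P t f) x - W x * P t f x) t) ∧
  (∀ f, Bdd f → (∀ x, 0 ≤ f x) → ∀ t, 0 ≤ t → ∀ x, 0 ≤ P t f x)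

end WGraph

section Aux

open WGraph

variable {V : Type*} [Fintype V] (G : WGraph V)

lemma WGraph.lap_eq (f : V → ℝ) (x : V) :
    G.lap f x = ∑ y, G.q x y * (f y - f x) := tsum_fintype _

lemma WGraph.q_nonneg (x y : V) : 0 ≤ G.q x y :=
  div_nonneg (G.nonneg x y) (G.mpos x).le

lemma WGraph.lap_smul (c : ℝ) (f : V → ℝ) (x : V) :
    G.lap (c • f) x = c * G.lap f x := by
  rw [WGraph.lap_eq, WGraph.lap_eq, Finset.mul_sum]
  refine Finset.sum_congr rfl fun y _ => ?_
  simp only [Pi.smul_apply, smul_eq_mul]; ring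

lemma WGraph.gamma_eq (f : V → ℝ) (x : V) :
    G.gamma f x = (1/2) * ∑ y, G.q x y * (f y - f x)^2 := by
  unfold WGraph.gamma WGraph.gammaB
  rw [G.lap_eq, G.lap_eq]
  have key : ∑ y, G.q x y * ((f*f) y - (f*f) x) - f x * ∑ y, G.q x y * (f y - f x)
      - f x * ∑ y, G.q x y * (f y - f x) = ∑ y, G.q x y * (f y - f x)^2 := by
    rw [Finset.mul_sum, ← Finset.sum_sub_distrib, ← Finset.sum_sub_distrib]
    exact Finset.sum_congr rfl fun y _ => by simp only [Pi.mul_apply]; ring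
  rw [key]

lemma WGraph.gamma_nonneg (f : V → ℝ) (x : V) : 0 ≤ G.gamma f x := by
  rw [WGraph.gamma_eq]
  refine mul_nonneg (by norm_num) (Finset.sum_nonneg fun y _ => ?_)
  exact mul_nonneg (G.q_nonneg x y) (sq_nonneg _)

lemma WGraph.gammaB_smul (c : ℝ) (f g : V → ℝ) (x : V) :
    G.gammaB f (c • g) x = c * G.gammaB f g x := by
  unfold WGraph.gammaB
  have h1 : f * (c • g) = c • (f * g) := by
    funext z; simp only [Pi.mul_apply, Pi.smul_apply, smul_eq_mul]; ring
  rw [h1, G.lap_smul, G.lap_smul]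
  simp only [Pi.smul_apply, smul_eq_mul]; ring

end Aux

open WGraph in
theorem lichnerowicz_spectrally_positive {V : Type*} [Fintype V] (G : WGraph V)
    (hconn : G.toSimpleGraph.Preconnected) (ρ : V → ℝ) (n : ℝ≥0∞) (hn : n ≠ 0)
    (hCD : G.CD ρ n) (K : ℝ) (hK : 0 < K)
    (hspec : ∀ f : V → ℝ, K * ∑ x, G.m x * f x * f x ≤
      ∑ x, G.m x * ((1 / 2) * (-(G.lap f x)) + ρ x * f x) * f x)
    (lam : ℝ) (hlam : lam ≠ 0)
    (hev : ∃ f : V → ℝ, f ≠ 0 ∧ ∀ x, -(G.lap f x) = lam * f x) :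
    K ≤ lam := by
  obtain ⟨f, hf0, hf⟩ := hev
  have hBdd : WGraph.Bdd f :=
    ⟨∑ y, |f y|, fun x => Finset.single_le_sum (fun i _ => abs_nonneg (f i)) (Finset.mem_univ x)⟩
  have hlapf : G.lap f = (-lam) • f := by
    funext x
    have := hf x
    simp only [Pi.smul_apply, smul_eq_mul]
    linarith
  have hg2 : ∀ x, G.gamma2 f x = (1/2) * G.lap (G.gamma f) x + lam * G.gamma f x := by
    intro x
    unfold WGraph.gamma2
    rw [hlapf, G.gammaB_smul]
    have hbf : G.gammaB f f x = G.gamma f x := rfl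
    rw [hbf]; ring
  have hpt : ∀ x, G.m x * ((1/2) * (-(G.lap (G.gamma f) x)) + ρ x * G.gamma f x) * G.gamma f x
      ≤ lam * (G.m x * G.gamma f x * G.gamma f x) := by
    intro x
    have hcd := hCD f hBdd x
    have ht : 0 ≤ (n⁻¹).toReal * (G.lap f x)^2 :=
      mul_nonneg ENNReal.toReal_nonneg (sq_nonneg _)
    have h1 : ρ x * G.gamma f x ≤ (1/2) * G.lap (G.gamma f) x + lam * G.gamma f x := by
      rw [← hg2 x]; linarith
    have h2 : (1/2) * (-(G.lap (G.gamma f) x)) + ρ x * G.gamma f x ≤ lam * G.gamma f x := by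
      linarith
    have hm := (G.mpos x).le
    have hhx := G.gamma_nonneg f x
    nlinarith [mul_le_mul_of_nonneg_left h2 (mul_nonneg hm hhx)]
  have hx0 : ∃ x, 0 < G.gamma f x := by
    by_contra hc
    push_neg at hc
    have hzero : ∀ x, G.gamma f x = 0 := fun x => le_antisymm (hc x) (G.gamma_nonneg f x)
    have hnb : ∀ x y, 0 < G.w x y → f y = f x := by
      intro x y hw
      have hz := hzero x
      rw [G.gamma_eq] at hz
      have hsum : ∑ z, G.q x z * (f z - f x)^2 = 0 := by linarith
      have hterm := (Finset.sum_eq_zero_iff_of_nonneg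
        (fun z _ => mul_nonneg (G.q_nonneg x z) (sq_nonneg _))).mp hsum y (Finset.mem_univ y)
      have hq : 0 < G.q x y := div_pos hw (G.mpos x)
      have hsq : (f y - f x)^2 = 0 := by
        rcases mul_eq_zero.mp hterm with h' | h'
        · exact absurd h' hq.ne'
        · exact h'
      have := pow_eq_zero_iff (n := 2) (by norm_num) |>.mp hsq
      linarith
    have hwalk : ∀ {a b : V}, G.toSimpleGraph.Walk a b → f b = f a := by
      intro a b p
      induction p with
      | nil => rfl
      | cons hadj _ ih => exact ih.trans (hnb _ _ hadj)
    obtain ⟨x0, hfx0⟩ := Function.ne_iff.mp hf0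
    have hconst : ∀ y, f y = f x0 := fun y => hwalk (hconn x0 y).some
    have hlap0 : G.lap f x0 = 0 := by
      rw [G.lap_eq]
      refine Finset.sum_eq_zero fun y _ => ?_
      rw [hconst y]; ring
    have hev0 := hf x0
    rw [hlap0] at hev0
    have hml : lam * f x0 = 0 := by linarith
    rcases mul_eq_zero.mp hml with h' | h'
    · exact hlam h'
    · exact hfx0 (by simpa using h')
  obtain ⟨x0, hx0pos⟩ := hx0
  have hS : 0 < ∑ x, G.m x * G.gamma f x * G.gamma f x := by
    refine Finset.sum_pos'
      (fun x _ => mul_nonneg (mul_nonneg (G.mpos x).le (G.gamma_nonneg f x)) (G.gamma_nonneg f x))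
      ⟨x0, Finset.mem_univ x0, ?_⟩
    exact mul_pos (mul_pos (G.mpos x0) hx0pos) hx0pos
  have h1 := hspec (G.gamma f)
  have h2 : ∑ x, G.m x * ((1/2) * (-(G.lap (G.gamma f) x)) + ρ x * G.gamma f x) * G.gamma f x
      ≤ lam * ∑ x, G.m x * G.gamma f x * G.gamma f x := by
    rw [Finset.mul_sum]
    exact Finset.sum_le_sum fun x _ => hpt x
  exact le_of_mul_le_mul_right (le_trans h1 h2) hS
end

section
/- (Semigroup gradient estimate, Ledoux-type) Let G be a weighted graph with Deg_max < ∞ satisfying CD(ρ, n). Then for all bounded functions f and all t ≥ 0, pointwise Γ(P_t f) ≤ P_t^{2ρ}(Γ f), where P_t = e^{tΔ} is the heat semigroup and P_t^{2ρ} = e^{-t(L + 2ρ)} the Schrödinger semigroup. -/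
open Real ENNReal

namespace WGraph

variable {V : Type*} (G : WGraph V)

/-- the finite neighbour set -/
noncomputable def nbr (x : V) : Finset V := (G.locFin x).toFinset

lemma mem_nbr {x y : V} : y ∈ G.nbr x ↔ G.w x y ≠ 0 := by
  simp [nbr, Set.Finite.mem_toFinset, Function.support]

lemma q_nonneg_s7 (x y : V) : 0 ≤ G.q x y := div_nonneg (G.nonneg x y) (G.mpos x).le

lemma q_zero_of_not_mem_nbr {x y : V} (h : y ∉ G.nbr x) : G.q x y = 0 := by
  rw [mem_nbr, not_not] at h
  simp [q, h]

lemma lap_eq_sum (g : V → ℝ) (x : V) :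
    G.lap g x = ∑ y ∈ G.nbr x, G.q x y * (g y - g x) := by
  refine tsum_eq_sum ?_
  intro b hb
  rw [G.q_zero_of_not_mem_nbr hb, zero_mul]

lemma deg_eq_sum (x : V) : G.deg x = ∑ y ∈ G.nbr x, G.q x y := by
  refine tsum_eq_sum ?_
  intro b hb
  exact G.q_zero_of_not_mem_nbr hb

lemma deg_nonneg' (x : V) : 0 ≤ G.deg x := by
  rw [deg_eq_sum]
  exact Finset.sum_nonneg fun y _ => G.q_nonneg_s7 x y

lemma gammaB_eq_sum (a b : V → ℝ) (x : V) :
    G.gammaB a b x = (1/2) * ∑ y ∈ G.nbr x, G.q x y * ((a y - a x) * (b y - b x)) := by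
  unfold gammaB
  rw [lap_eq_sum, lap_eq_sum, lap_eq_sum, Finset.mul_sum, Finset.mul_sum,
    ← Finset.sum_sub_distrib, ← Finset.sum_sub_distrib]
  congr 1
  refine Finset.sum_congr rfl fun y _ => ?_
  simp only [Pi.mul_apply]
  ring

lemma gamma_eq_sum (a : V → ℝ) (x : V) :
    G.gamma a x = (1/2) * ∑ y ∈ G.nbr x, G.q x y * (a y - a x)^2 := by
  rw [gamma, gammaB_eq_sum]
  congr 1
  refine Finset.sum_congr rfl fun y _ => ?_
  ring

lemma gamma_nonneg' (a : V → ℝ) (x : V) : 0 ≤ G.gamma a x := by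
  rw [gamma_eq_sum]
  refine mul_nonneg (by norm_num) (Finset.sum_nonneg fun y _ => ?_)
  exact mul_nonneg (G.q_nonneg_s7 x y) (sq_nonneg _)

lemma lap_abs_le {D0 C : ℝ} (hdeg : ∀ y, G.deg y ≤ D0) {g : V → ℝ}
    (hC : ∀ u, |g u| ≤ C) (y : V) : |G.lap g y| ≤ 2 * D0 * C := by
  have hC0 : 0 ≤ C := le_trans (abs_nonneg _) (hC y)
  rw [lap_eq_sum]
  calc |∑ z ∈ G.nbr y, G.q y z * (g z - g y)|
      ≤ ∑ z ∈ G.nbr y, |G.q y z * (g z - g y)| := Finset.abs_sum_le_sum_abs _ _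
    _ ≤ ∑ z ∈ G.nbr y, G.q y z * (2 * C) := by
        refine Finset.sum_le_sum fun z _ => ?_
        rw [abs_mul, abs_of_nonneg (G.q_nonneg_s7 y z)]
        refine mul_le_mul_of_nonneg_left ?_ (G.q_nonneg_s7 y z)
        calc |g z - g y| ≤ |g z| + |g y| := abs_sub _ _
          _ ≤ C + C := add_le_add (hC z) (hC y)
          _ = 2 * C := by ring
    _ = G.deg y * (2 * C) := by rw [← Finset.sum_mul, ← deg_eq_sum]
    _ ≤ D0 * (2 * C) := mul_le_mul_of_nonneg_right (hdeg y) (by linarith)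
    _ = 2 * D0 * C := by ring

lemma lap_le_deg {g : V → ℝ} {C : ℝ} (hC : ∀ u, g u ≤ C) {y : V} (h0 : 0 ≤ g y) :
    G.lap g y ≤ G.deg y * C := by
  rw [lap_eq_sum, deg_eq_sum, Finset.sum_mul]
  refine Finset.sum_le_sum fun z _ => ?_
  refine mul_le_mul_of_nonneg_left ?_ (G.q_nonneg_s7 y z)
  linarith [hC z]

lemma neg_deg_le_lap {g : V → ℝ} (h0 : ∀ u, 0 ≤ g u) (y : V) :
    -(G.deg y * g y) ≤ G.lap g y := by
  rw [lap_eq_sum, deg_eq_sum, Finset.sum_mul, ← Finset.sum_neg_distrib]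
  refine Finset.sum_le_sum fun z _ => ?_
  nlinarith [G.q_nonneg_s7 y z, h0 z, h0 y]

lemma lap_sub_pt (a b : V → ℝ) (x : V) :
    G.lap a x - G.lap b x = G.lap (fun u => a u - b u) x := by
  rw [lap_eq_sum, lap_eq_sum, lap_eq_sum, ← Finset.sum_sub_distrib]
  refine Finset.sum_congr rfl fun y _ => ?_
  ring

lemma gammaB_abs_le_deg {a b : V → ℝ} {Ca Cb : ℝ} (ha : ∀ u, |a u| ≤ Ca)
    (hb : ∀ u, |b u| ≤ Cb) (y : V) : |G.gammaB a b y| ≤ G.deg y * (2 * (Ca * Cb)) := by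
  have hCa : 0 ≤ Ca := le_trans (abs_nonneg _) (ha y)
  have hCb : 0 ≤ Cb := le_trans (abs_nonneg _) (hb y)
  rw [gammaB_eq_sum, abs_mul]
  rw [abs_of_nonneg (by norm_num : (0:ℝ) ≤ 1/2)]
  calc (1/2) * |∑ z ∈ G.nbr y, G.q y z * ((a z - a y) * (b z - b y))|
      ≤ (1/2) * ∑ z ∈ G.nbr y, G.q y z * ((2*Ca) * (2*Cb)) := by
        refine mul_le_mul_of_nonneg_left ?_ (by norm_num)
        refine le_trans (Finset.abs_sum_le_sum_abs _ _) (Finset.sum_le_sum fun z _ => ?_)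
        rw [abs_mul, abs_of_nonneg (G.q_nonneg_s7 y z), abs_mul]
        refine mul_le_mul_of_nonneg_left ?_ (G.q_nonneg_s7 y z)
        have h1 : |a z - a y| ≤ 2*Ca := by
          calc |a z - a y| ≤ |a z| + |a y| := abs_sub _ _
            _ ≤ 2*Ca := by linarith [ha z, ha y]
        have h2 : |b z - b y| ≤ 2*Cb := by
          calc |b z - b y| ≤ |b z| + |b y| := abs_sub _ _
            _ ≤ 2*Cb := by linarith [hb z, hb y]
        exact mul_le_mul h1 h2 (abs_nonneg _) (by linarith)
    _ = G.deg y * (2 * (Ca * Cb)) := by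
        rw [← Finset.sum_mul, ← deg_eq_sum]
        ring

lemma gamma_le_of_bdd {D0 Ca : ℝ} (hdeg : ∀ y, G.deg y ≤ D0) {a : V → ℝ}
    (ha : ∀ u, |a u| ≤ Ca) (y : V) : G.gamma a y ≤ 2 * D0 * Ca^2 := by
  have hCa : 0 ≤ Ca := le_trans (abs_nonneg _) (ha y)
  have h := G.gammaB_abs_le_deg ha ha y
  rw [← gamma] at h
  have h2 : G.deg y * (2 * (Ca * Ca)) ≤ D0 * (2 * (Ca * Ca)) :=
    mul_le_mul_of_nonneg_right (hdeg y) (by positivity)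
  calc G.gamma a y ≤ |G.gamma a y| := le_abs_self _
    _ ≤ G.deg y * (2 * (Ca * Ca)) := h
    _ ≤ D0 * (2 * (Ca * Ca)) := h2
    _ = 2 * D0 * Ca^2 := by ring

lemma q_eq_zero_of_deg_eq_zero {z : V} (h : G.deg z = 0) (u : V) : G.q z u = 0 := by
  by_cases hu : u ∈ G.nbr z
  · have hsum : ∑ y ∈ G.nbr z, G.q z y = 0 := by rw [← deg_eq_sum, h]
    have := (Finset.sum_eq_zero_iff_of_nonneg (fun y _ => G.q_nonneg_s7 z y)).mp hsum
    exact this u hu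
  · exact G.q_zero_of_not_mem_nbr hu

lemma lap_eq_zero_of_deg_eq_zero {z : V} (h : G.deg z = 0) (g : V → ℝ) :
    G.lap g z = 0 := by
  rw [lap_eq_sum]
  refine Finset.sum_eq_zero fun y _ => ?_
  rw [G.q_eq_zero_of_deg_eq_zero h, zero_mul]

lemma gammaB_eq_zero_of_deg_eq_zero {z : V} (h : G.deg z = 0) (a b : V → ℝ) :
    G.gammaB a b z = 0 := by
  rw [gammaB_eq_sum]
  have : ∑ y ∈ G.nbr z, G.q z y * ((a y - a z) * (b y - b z)) = 0 :=
    Finset.sum_eq_zero fun y _ => by rw [G.q_eq_zero_of_deg_eq_zero h, zero_mul]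
  rw [this, mul_zero]

lemma gamma_eq_zero_of_deg_eq_zero {z : V} (h : G.deg z = 0) (a : V → ℝ) :
    G.gamma a z = 0 := G.gammaB_eq_zero_of_deg_eq_zero h a a

end WGraph
namespace WGraph

variable {V : Type*} (G : WGraph V)

lemma gamma_taylor {D0 : ℝ} (hdeg : ∀ y, G.deg y ≤ D0) (u v L : V → ℝ)
    (h M ML Eps dd : ℝ) (hM0 : 0 ≤ M) (hML0 : 0 ≤ ML) (hEps0 : 0 ≤ Eps) (hdd0 : 0 ≤ dd)
    (hu : ∀ w, |u w| ≤ M) (hv : ∀ w, |v w| ≤ M) (hL : ∀ w, |L w| ≤ ML)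
    (hEps : ∀ w, |v w - u w + h * L w| ≤ Eps) (hdd : ∀ w, |v w - u w| ≤ dd) (y : V) :
    |G.gamma v y - G.gamma u y + 2 * h * G.gammaB u L y|
      ≤ D0 * (4 * Eps * M + 2 * |h| * ML * dd) := by
  have hD0 : 0 ≤ D0 := le_trans (G.deg_nonneg' y) (hdeg y)
  rw [gamma_eq_sum, gamma_eq_sum, gammaB_eq_sum]
  have hcomb : (1/2) * ∑ z ∈ G.nbr y, G.q y z * (v z - v y)^2
      - (1/2) * ∑ z ∈ G.nbr y, G.q y z * (u z - u y)^2
      + 2 * h * ((1/2) * ∑ z ∈ G.nbr y, G.q y z * ((u z - u y) * (L z - L y)))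
      = (1/2) * ∑ z ∈ G.nbr y, G.q y z *
          ((v z - v y)^2 - (u z - u y)^2 + 2 * h * ((u z - u y) * (L z - L y))) := by
    have hsplit : ∑ z ∈ G.nbr y, G.q y z *
          ((v z - v y)^2 - (u z - u y)^2 + 2 * h * ((u z - u y) * (L z - L y)))
        = ∑ z ∈ G.nbr y, (G.q y z * (v z - v y)^2 - G.q y z * (u z - u y)^2
          + 2 * h * (G.q y z * ((u z - u y) * (L z - L y)))) :=
      Finset.sum_congr rfl fun z _ => by ring
    rw [hsplit, Finset.sum_add_distrib, Finset.sum_sub_distrib, ← Finset.mul_sum]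
    ring
  rw [hcomb]
  have hterm : ∀ z, |(v z - v y)^2 - (u z - u y)^2 + 2 * h * ((u z - u y) * (L z - L y))|
      ≤ 8 * Eps * M + 4 * |h| * ML * dd := by
    intro z
    set a := u z - u y with ha
    set b := v z - v y with hb
    set c := L z - L y with hc
    set r := (v z - u z + h * L z) - (v y - u y + h * L y) with hr
    have hid : b^2 - a^2 + 2 * h * (a * c) = r * (a + b) - h * c * (b - a) := by
      rw [ha, hb, hc, hr]; ring
    have hrb : |r| ≤ 2 * Eps := by
      rw [hr]
      calc |(v z - u z + h * L z) - (v y - u y + h * L y)|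
          ≤ |v z - u z + h * L z| + |v y - u y + h * L y| := abs_sub _ _
        _ ≤ 2 * Eps := by linarith [hEps z, hEps y]
    have hba : |b - a| ≤ 2 * dd := by
      rw [ha, hb]
      have : v z - v y - (u z - u y) = (v z - u z) - (v y - u y) := by ring
      rw [this]
      calc |(v z - u z) - (v y - u y)| ≤ |v z - u z| + |v y - u y| := abs_sub _ _
        _ ≤ 2 * dd := by linarith [hdd z, hdd y]
    have hab : |a + b| ≤ 4 * M := by
      calc |a + b| ≤ |a| + |b| := abs_add_le _ _
        _ ≤ (|u z| + |u y|) + (|v z| + |v y|) := by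
            refine add_le_add ?_ ?_
            · rw [ha]; exact abs_sub _ _
            · rw [hb]; exact abs_sub _ _
        _ ≤ 4 * M := by linarith [hu z, hu y, hv z, hv y]
    have hcb : |c| ≤ 2 * ML := by
      rw [hc]
      calc |L z - L y| ≤ |L z| + |L y| := abs_sub _ _
        _ ≤ 2 * ML := by linarith [hL z, hL y]
    rw [hid]
    calc |r * (a + b) - h * c * (b - a)|
        ≤ |r * (a + b)| + |h * c * (b - a)| := abs_sub _ _
      _ = |r| * |a + b| + |h| * |c| * |b - a| := by rw [abs_mul, abs_mul, abs_mul]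
      _ ≤ (2 * Eps) * (4 * M) + |h| * (2 * ML) * (2 * dd) := by
          refine add_le_add (mul_le_mul hrb hab (abs_nonneg _) (by linarith)) ?_
          refine mul_le_mul ?_ hba (abs_nonneg _) ?_
          · exact mul_le_mul_of_nonneg_left hcb (abs_nonneg _)
          · positivity
      _ ≤ 8 * Eps * M + 4 * |h| * ML * dd := by nlinarith [abs_nonneg h]
  calc |(1/2) * ∑ z ∈ G.nbr y, G.q y z *
          ((v z - v y)^2 - (u z - u y)^2 + 2 * h * ((u z - u y) * (L z - L y)))|
      ≤ (1/2) * ∑ z ∈ G.nbr y, G.q y z * (8 * Eps * M + 4 * |h| * ML * dd) := by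
        rw [abs_mul, abs_of_nonneg (by norm_num : (0:ℝ) ≤ 1/2)]
        refine mul_le_mul_of_nonneg_left ?_ (by norm_num)
        refine le_trans (Finset.abs_sum_le_sum_abs _ _) (Finset.sum_le_sum fun z _ => ?_)
        rw [abs_mul, abs_of_nonneg (G.q_nonneg_s7 y z)]
        exact mul_le_mul_of_nonneg_left (hterm z) (G.q_nonneg_s7 y z)
    _ = (1/2) * (G.deg y * (8 * Eps * M + 4 * |h| * ML * dd)) := by
        rw [← Finset.sum_mul, ← deg_eq_sum]
    _ ≤ (1/2) * (D0 * (8 * Eps * M + 4 * |h| * ML * dd)) := by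
        refine mul_le_mul_of_nonneg_left ?_ (by norm_num)
        refine mul_le_mul_of_nonneg_right (hdeg y) ?_
        positivity
    _ = D0 * (4 * Eps * M + 2 * |h| * ML * dd) := by ring

lemma Bdd.add {a b : V → ℝ} (ha : Bdd a) (hb : Bdd b) : Bdd (a + b) := by
  obtain ⟨Ca, hCa⟩ := ha; obtain ⟨Cb, hCb⟩ := hb
  exact ⟨Ca + Cb, fun y => by
    calc |(a + b) y| = |a y + b y| := rfl
      _ ≤ |a y| + |b y| := abs_add_le _ _
      _ ≤ Ca + Cb := add_le_add (hCa y) (hCb y)⟩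

lemma Bdd.sub {a b : V → ℝ} (ha : Bdd a) (hb : Bdd b) : Bdd (a - b) := by
  obtain ⟨Ca, hCa⟩ := ha; obtain ⟨Cb, hCb⟩ := hb
  exact ⟨Ca + Cb, fun y => by
    calc |(a - b) y| = |a y - b y| := rfl
      _ ≤ |a y| + |b y| := abs_sub _ _
      _ ≤ Ca + Cb := add_le_add (hCa y) (hCb y)⟩

lemma Bdd.smul (c : ℝ) {a : V → ℝ} (ha : Bdd a) : Bdd (c • a) := by
  obtain ⟨Ca, hCa⟩ := ha
  refine ⟨|c| * Ca, fun y => ?_⟩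
  calc |(c • a) y| = |c| * |a y| := by rw [Pi.smul_apply, smul_eq_mul, abs_mul]
    _ ≤ |c| * Ca := mul_le_mul_of_nonneg_left (hCa y) (abs_nonneg c)

end WGraph

namespace WGraph

section Semigroup

variable {V : Type*} {G : WGraph V} {W : V → ℝ} {S : ℝ → (V → ℝ) → V → ℝ}

lemma sg_zero (hS : G.IsSemigroup W S) (τ : ℝ) : S τ (0 : V → ℝ) = 0 := by
  have h := hS.2.2.2.1 τ (0 : ℝ) (0 : V → ℝ)
  rwa [zero_smul, zero_smul] at h

lemma sg_sub (hS : G.IsSemigroup W S) (τ : ℝ) (a b : V → ℝ) : S τ (a - b) = S τ a - S τ b := by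
  have h1 := hS.2.2.1 τ a ((-1 : ℝ) • b)
  have h2 := hS.2.2.2.1 τ (-1 : ℝ) b
  have e : a - b = a + (-1 : ℝ) • b := by rw [neg_one_smul, ← sub_eq_add_neg]
  rw [e, h1, h2, neg_one_smul, ← sub_eq_add_neg]

lemma sg_sub_pt (hS : G.IsSemigroup W S) (τ : ℝ) (a b : V → ℝ) (z : V) :
    S τ (a - b) z = S τ a z - S τ b z := by rw [sg_sub hS]; rfl

lemma sg_smul_pt (hS : G.IsSemigroup W S) (τ : ℝ) (c : ℝ) (a : V → ℝ) (z : V) :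
    S τ (c • a) z = c * S τ a z := by
  rw [hS.2.2.2.1 τ c a, Pi.smul_apply, smul_eq_mul]

lemma sg_add_pt (hS : G.IsSemigroup W S) (τ : ℝ) (a b : V → ℝ) (z : V) :
    S τ (a + b) z = S τ a z + S τ b z := by rw [hS.2.2.1 τ a b]; rfl

lemma sg_mono (hS : G.IsSemigroup W S) {τ : ℝ} (hτ : 0 ≤ τ) {a b : V → ℝ} (hBa : Bdd a) (hBb : Bdd b)
    (hab : ∀ y, a y ≤ b y) (z : V) : S τ a z ≤ S τ b z := by
  have hpos := hS.2.2.2.2.2.2.2 (b - a) (hBb.sub hBa)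
    (fun y => by simpa [Pi.sub_apply, sub_nonneg] using hab y) τ hτ z
  rw [sg_sub_pt hS] at hpos
  linarith

lemma sg_abs_le (hS : G.IsSemigroup W S) {τ : ℝ} (hτ : 0 ≤ τ) {a : V → ℝ} {C : ℝ} (hBa : Bdd a)
    (hC : ∀ y, |a y| ≤ C) (z : V) :
    |S τ a z| ≤ C * S τ (fun _ => (1 : ℝ)) z := by
  have hC0 : 0 ≤ C := le_trans (abs_nonneg _) (hC z)
  have hBone : Bdd (fun _ : V => (1 : ℝ)) := ⟨1, fun y => by norm_num⟩
  have hBCone : Bdd (C • (fun _ : V => (1 : ℝ))) := hBone.smul C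
  have hub : S τ a z ≤ C * S τ (fun _ => (1 : ℝ)) z := by
    have := sg_mono hS hτ hBa hBCone
      (fun y => by
        simpa [Pi.smul_apply, smul_eq_mul] using (abs_le.mp (hC y)).2) z
    rwa [sg_smul_pt hS] at this
  have hlb : -(C * S τ (fun _ => (1 : ℝ)) z) ≤ S τ a z := by
    have := sg_mono hS hτ (hBCone.smul (-1 : ℝ)) hBa
      (fun y => by
        have := (abs_le.mp (hC y)).1
        simpa [Pi.smul_apply, smul_eq_mul] using this) z
    rw [sg_smul_pt hS] at this
    rw [sg_smul_pt hS] at this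
    linarith
  exact abs_le.mpr ⟨by linarith, hub⟩

end Semigroup

end WGraph

section Gronwall

open Set

lemma mono_of_derivIcc {φ d : ℝ → ℝ} {a b : ℝ} (hab : a ≤ b)
    (hc : ContinuousOn φ (Icc a b)) (hd : ∀ σ ∈ Ioo a b, HasDerivAt φ (d σ) σ)
    (h0 : ∀ σ ∈ Ioo a b, 0 ≤ d σ) : φ a ≤ φ b := by
  have hmono := monotoneOn_of_deriv_nonneg (convex_Icc a b) hc
    (fun σ hσ => by
      rw [interior_Icc] at hσ
      exact (hd σ hσ).differentiableAt.differentiableWithinAt)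
    (fun σ hσ => by
      rw [interior_Icc] at hσ
      rw [(hd σ hσ).deriv]
      exact h0 σ hσ)
  exact hmono ⟨le_refl a, hab⟩ ⟨hab, le_refl b⟩ hab

lemma gronwall_ge {φ d : ℝ → ℝ} {a b κ : ℝ} (hab : a ≤ b)
    (hc : ContinuousOn φ (Icc a b)) (hd : ∀ σ ∈ Ioo a b, HasDerivAt φ (d σ) σ)
    (hlb : ∀ σ ∈ Ioo a b, -(κ * φ σ) ≤ d σ) :
    Real.exp (κ * a) * φ a ≤ Real.exp (κ * b) * φ b := by
  refine mono_of_derivIcc (φ := fun σ => Real.exp (κ * σ) * φ σ)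
    (d := fun σ => Real.exp (κ * σ) * κ * φ σ + Real.exp (κ * σ) * d σ) hab ?_ ?_ ?_
  · exact ((Real.continuous_exp.comp (continuous_const.mul continuous_id)).continuousOn).mul hc
  · intro σ hσ
    have hexp : HasDerivAt (fun σ : ℝ => Real.exp (κ * σ)) (Real.exp (κ * σ) * κ) σ := by
      have h1 : HasDerivAt (fun σ : ℝ => κ * σ) κ σ := by
        simpa using (hasDerivAt_id σ).const_mul κ
      simpa using h1.exp
    exact hexp.mul (hd σ hσ)
  · intro σ hσ
    have h1 := hlb σ hσ
    have h2 := Real.exp_pos (κ * σ)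
    show (0:ℝ) ≤ Real.exp (κ * σ) * κ * φ σ + Real.exp (κ * σ) * d σ
    nlinarith [mul_nonneg h2.le (by linarith : (0:ℝ) ≤ κ * φ σ + d σ)]

lemma gronwall_le {φ d : ℝ → ℝ} {a b κ : ℝ} (hab : a ≤ b)
    (hc : ContinuousOn φ (Icc a b)) (hd : ∀ σ ∈ Ioo a b, HasDerivAt φ (d σ) σ)
    (hub : ∀ σ ∈ Ioo a b, d σ ≤ κ * φ σ) :
    Real.exp (-(κ * b)) * φ b ≤ Real.exp (-(κ * a)) * φ a := by
  have key := mono_of_derivIcc (φ := fun σ => -(Real.exp (-(κ * σ)) * φ σ))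
    (d := fun σ => -(Real.exp (-(κ * σ)) * (-κ) * φ σ + Real.exp (-(κ * σ)) * d σ)) hab ?_ ?_ ?_
  · linarith
  · exact (((Real.continuous_exp.comp
      (continuous_const.mul continuous_id).neg).continuousOn).mul hc).neg
  · intro σ hσ
    have hexp : HasDerivAt (fun σ : ℝ => Real.exp (-(κ * σ))) (Real.exp (-(κ * σ)) * (-κ)) σ := by
      have h1 : HasDerivAt (fun σ : ℝ => -(κ * σ)) (-κ) σ := by
        simpa [Pi.neg_def] using ((hasDerivAt_id σ).const_mul κ).neg
      simpa using h1.exp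
    exact (hexp.mul (hd σ hσ)).neg
  · intro σ hσ
    have h1 := hub σ hσ
    have h2 := Real.exp_pos (-(κ * σ))
    show (0:ℝ) ≤ -(Real.exp (-(κ * σ)) * (-κ) * φ σ + Real.exp (-(κ * σ)) * d σ)
    nlinarith [mul_nonneg h2.le (by linarith : (0:ℝ) ≤ κ * φ σ - d σ)]

end Gronwall
set_option maxHeartbeats 2000000 in
open WGraph in
theorem gradient_estimate_ledoux {V : Type*} (G : WGraph V)
    (hD : BddAbove (Set.range G.deg))
    (ρ : V → ℝ) (n : ℝ≥0∞) (hn : n ≠ 0) (hCD : G.CD ρ n)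
    (P Q : ℝ → (V → ℝ) → V → ℝ)
    (hP : G.IsSemigroup 0 P) (hQ : G.IsSemigroup (2 • ρ) Q)
    (f : V → ℝ) (hf : Bdd f) (t : ℝ) (ht : 0 ≤ t) (x : V) :
    G.gamma (P t f) x ≤ Q t (G.gamma f) x := by
  classical
  rcases eq_or_lt_of_le ht with h0 | htpos
  · rw [← h0, hP.1, hQ.1]
  have hPbdd := hP.2.2.2.2.1
  have hPcont := hP.2.2.2.2.2.1
  have hPpos := hP.2.2.2.2.2.2.2
  have hQz := hQ.1
  have hQsg := hQ.2.1
  have hQbdd := hQ.2.2.2.2.1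
  have hQcont := hQ.2.2.2.2.2.1
  have hQpos := hQ.2.2.2.2.2.2.2
  have hPz := hP.1
  have hPd : ∀ (a : V → ℝ), Bdd a → ∀ (z : V) (σ : ℝ), 0 < σ →
      HasDerivAt (fun τ => P τ a z) (G.lap (P σ a) z) σ := by
    intro a hBa z σ hσ
    have h := hP.2.2.2.2.2.2.1 a hBa z σ hσ
    simpa using h
  have h2ρ : ∀ y : V, (2 • ρ) y = 2 * ρ y := by
    intro y
    simp [Pi.smul_apply]
  have hQd : ∀ (a : V → ℝ), Bdd a → ∀ (z : V) (σ : ℝ), 0 < σ →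
      HasDerivAt (fun τ => Q τ a z) (G.lap (Q σ a) z - 2 * ρ z * Q σ a z) σ := by
    intro a hBa z σ hσ
    have h := hQ.2.2.2.2.2.2.1 a hBa z σ hσ
    rwa [h2ρ z] at h
  obtain ⟨D', hD'⟩ := hD
  set D0 : ℝ := max D' 0 with hD0def
  have hdeg : ∀ y, G.deg y ≤ D0 := fun y => le_trans (hD' ⟨y, rfl⟩) (le_max_left _ _)
  have hD0 : 0 ≤ D0 := le_max_right _ _
  have hBone : Bdd (fun _ : V => (1:ℝ)) := ⟨1, fun y => by norm_num⟩
  -- ====== P-side uniform bound ======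
  obtain ⟨CP0, hCP0⟩ := hPbdd (fun _ : V => (1:ℝ)) hBone t ht
  set CP : ℝ := max CP0 0 with hCPdef
  have hCP : ∀ y, P t (fun _ : V => (1:ℝ)) y ≤ CP :=
    fun y => le_trans (le_abs_self _) (le_trans (hCP0 y) (le_max_left _ _))
  have hCPnn : (0:ℝ) ≤ CP := le_max_right _ _
  set KP : ℝ := Real.exp (D0 * t) * CP with hKPdef
  have hKPnn : 0 ≤ KP := mul_nonneg (Real.exp_pos _).le hCPnn
  have hPone_nn : ∀ r, 0 ≤ r → ∀ y, 0 ≤ P r (fun _ : V => (1:ℝ)) y :=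
    fun r hr y => hPpos _ hBone (fun z => by norm_num) r hr y
  have hP1 : ∀ r ∈ Set.Icc (0:ℝ) t, ∀ y, P r (fun _ : V => (1:ℝ)) y ≤ KP := by
    intro r hr y
    have hgr := gronwall_ge (φ := fun σ => P σ (fun _ : V => (1:ℝ)) y)
      (d := fun σ => G.lap (P σ (fun _ : V => (1:ℝ))) y) (κ := D0) hr.2
      ((hPcont _ hBone y).mono (fun σ hσ => le_trans hr.1 hσ.1))
      (fun σ hσ => hPd _ hBone y σ (lt_of_le_of_lt hr.1 hσ.1)) ?_
    · calc P r (fun _ : V => (1:ℝ)) y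
          ≤ Real.exp (D0 * r) * P r (fun _ : V => (1:ℝ)) y :=
            le_mul_of_one_le_left (hPone_nn r hr.1 y)
              (Real.one_le_exp (mul_nonneg hD0 hr.1))
        _ ≤ Real.exp (D0 * t) * P t (fun _ : V => (1:ℝ)) y := hgr
        _ ≤ KP := by
            rw [hKPdef]
            exact mul_le_mul_of_nonneg_left (hCP y) (Real.exp_pos _).le
    · intro σ hσ
      have h0σ : 0 ≤ σ := le_trans hr.1 hσ.1.le
      have h2 := G.neg_deg_le_lap (fun u => hPone_nn σ h0σ u) y
      have h3 : G.deg y * P σ (fun _ : V => (1:ℝ)) y ≤ D0 * P σ (fun _ : V => (1:ℝ)) y :=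
        mul_le_mul_of_nonneg_right (hdeg y) (hPone_nn σ h0σ y)
      linarith
  obtain ⟨Cf0, hCf0⟩ := hf
  set Cf : ℝ := max Cf0 0 with hCfdef
  have hCf : ∀ y, |f y| ≤ Cf := fun y => le_trans (hCf0 y) (le_max_left _ _)
  have hCfnn : (0:ℝ) ≤ Cf := le_max_right _ _
  have hBf : Bdd f := ⟨Cf, hCf⟩
  set MP : ℝ := Cf * KP with hMPdef
  have hMPnn : 0 ≤ MP := mul_nonneg hCfnn hKPnn
  have hMP : ∀ r ∈ Set.Icc (0:ℝ) t, ∀ y, |P r f y| ≤ MP := by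
    intro r hr y
    calc |P r f y| ≤ Cf * P r (fun _ : V => (1:ℝ)) y := sg_abs_le hP hr.1 hBf hCf y
      _ ≤ Cf * KP := mul_le_mul_of_nonneg_left (hP1 r hr y) hCfnn
  -- ====== P Lipschitz ======
  have hPLip : ∀ r ∈ Set.Icc (0:ℝ) t, ∀ r' ∈ Set.Icc (0:ℝ) t, ∀ y,
      |P r' f y - P r f y| ≤ 2 * D0 * MP * |r' - r| := by
    have main : ∀ r r' : ℝ, r ∈ Set.Icc (0:ℝ) t → r' ∈ Set.Icc (0:ℝ) t → r < r' → ∀ y,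
        |P r' f y - P r f y| ≤ 2 * D0 * MP * |r' - r| := by
      intro r r' hr hr' hlt y
      obtain ⟨c, hc, hceq⟩ := exists_hasDerivAt_eq_slope (fun σ => P σ f y)
        (fun σ => G.lap (P σ f) y) hlt
        ((hPcont f hBf y).mono (fun σ hσ => le_trans hr.1 hσ.1))
        (fun σ hσ => hPd f hBf y σ (lt_of_le_of_lt hr.1 hσ.1))
      have hcI : c ∈ Set.Icc (0:ℝ) t := ⟨le_trans hr.1 hc.1.le, le_trans hc.2.le hr'.2⟩
      have hlap : |G.lap (P c f) y| ≤ 2 * D0 * MP :=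
        G.lap_abs_le hdeg (fun u => hMP c hcI u) y
      have hne : r' - r ≠ 0 := sub_ne_zero.mpr hlt.ne'
      have heq : P r' f y - P r f y = G.lap (P c f) y * (r' - r) := by
        rw [hceq, div_mul_cancel₀ _ hne]
      rw [heq, abs_mul]
      exact mul_le_mul_of_nonneg_right hlap (abs_nonneg _)
    intro r hr r' hr' y
    rcases lt_trichotomy r r' with h | h | h
    · exact main r r' hr hr' h y
    · subst h; simp
    · have h1 := main r' r hr' hr h y
      rw [abs_sub_comm (P r' f y) (P r f y), abs_sub_comm r' r]
      exact h1
  -- ====== u-Taylor (P-side second order) ======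
  have hmvt : ∀ s σ : ℝ, s ∈ Set.Ioo (0:ℝ) t → σ ∈ Set.Ioo (0:ℝ) t → s ≠ σ → ∀ w,
      ∃ c, ((s < c ∧ c < σ) ∨ (σ < c ∧ c < s)) ∧
        P (t - σ) f w - P (t - s) f w = (σ - s) * (-(G.lap (P (t - c) f) w)) := by
    intro s σ hs hσ hne w
    have hudv : ∀ τ ∈ Set.Ioo (0:ℝ) t, HasDerivAt (fun τ' => P (t - τ') f w)
        (-(G.lap (P (t - τ) f) w)) τ := by
      intro τ hτ
      have hin := hPd f hBf w (t - τ) (by linarith [hτ.2])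
      have hout : HasDerivAt (fun τ' : ℝ => t - τ') (-1) τ := by
        simpa using (hasDerivAt_id τ).const_sub t
      have hcomp := HasDerivAt.comp τ hin hout
      simpa [Function.comp_def, mul_neg_one] using hcomp
    have hcontu : ∀ a b : ℝ, 0 ≤ a → b ≤ t →
        ContinuousOn (fun τ' => P (t - τ') f w) (Set.Icc a b) := by
      intro a b ha hb
      have hmap : Set.MapsTo (fun τ' : ℝ => t - τ') (Set.Icc a b) (Set.Ici 0) := by
        intro τ hτ
        simp only [Set.mem_Ici]
        linarith [hτ.2]
      exact ContinuousOn.comp (hPcont f hBf w)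
        ((continuous_const.sub continuous_id).continuousOn) hmap
    rcases hne.lt_or_gt with hlt | hlt
    · obtain ⟨c, hc, hceq⟩ := exists_hasDerivAt_eq_slope (fun τ' => P (t - τ') f w)
        (fun τ => -(G.lap (P (t - τ) f) w)) hlt
        (hcontu s σ hs.1.le hσ.2.le)
        (fun τ hτ => hudv τ ⟨lt_trans hs.1 hτ.1, lt_trans hτ.2 hσ.2⟩)
      refine ⟨c, Or.inl hc, ?_⟩
      have hne2 : σ - s ≠ 0 := sub_ne_zero.mpr hlt.ne'
      rw [mul_comm]
      rw [hceq, div_mul_cancel₀ _ hne2]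
    · obtain ⟨c, hc, hceq⟩ := exists_hasDerivAt_eq_slope (fun τ' => P (t - τ') f w)
        (fun τ => -(G.lap (P (t - τ) f) w)) hlt
        (hcontu σ s hσ.1.le hs.2.le)
        (fun τ hτ => hudv τ ⟨lt_trans hσ.1 hτ.1, lt_trans hτ.2 hs.2⟩)
      refine ⟨c, Or.inr hc, ?_⟩
      have hne2 : s - σ ≠ 0 := sub_ne_zero.mpr hlt.ne'
      have h1 : P (t - s) f w - P (t - σ) f w = -(G.lap (P (t - c) f) w) * (s - σ) := by
        rw [hceq, div_mul_cancel₀ _ hne2]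
      have h2 : P (t - σ) f w - P (t - s) f w = -((-(G.lap (P (t - c) f) w)) * (s - σ)) := by
        rw [← h1]; ring
      rw [h2]; ring
  set CT : ℝ := 2 * D0 * (2 * D0 * MP) with hCTdef
  have hCTnn : 0 ≤ CT := by rw [hCTdef]; positivity
  have hutay : ∀ s ∈ Set.Ioo (0:ℝ) t, ∀ σ ∈ Set.Ioo (0:ℝ) t, ∀ w,
      |P (t - σ) f w - P (t - s) f w + (σ - s) * G.lap (P (t - s) f) w|
        ≤ CT * (σ - s)^2 := by
    intro s hs σ hσ w
    rcases eq_or_ne s σ with he | hne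
    · subst he; simp
    obtain ⟨c, hc, heq⟩ := hmvt s σ hs hσ hne w
    have hcI : c ∈ Set.Icc (0:ℝ) t := by
      rcases hc with ⟨h1, h2⟩ | ⟨h1, h2⟩ <;> constructor <;>
        linarith [hs.1, hs.2, hσ.1, hσ.2]
    have hcd : |c - s| ≤ |σ - s| := by
      rcases hc with ⟨h1, h2⟩ | ⟨h1, h2⟩
      · rw [abs_of_nonneg (by linarith), abs_of_nonneg (by linarith)]; linarith
      · rw [abs_of_nonpos (by linarith), abs_of_nonpos (by linarith)]; linarith
    have e2 : P (t - σ) f w - P (t - s) f w + (σ - s) * G.lap (P (t - s) f) w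
        = (σ - s) * (G.lap (P (t - s) f) w - G.lap (P (t - c) f) w) := by
      rw [heq]; ring
    rw [e2, abs_mul]
    have hsI : s ∈ Set.Icc (0:ℝ) t := ⟨hs.1.le, hs.2.le⟩
    have hlapdiff : |G.lap (P (t - s) f) w - G.lap (P (t - c) f) w|
        ≤ 2 * D0 * (2 * D0 * MP * |σ - s|) := by
      rw [G.lap_sub_pt]
      refine G.lap_abs_le hdeg (fun u => ?_) w
      have h1 := hPLip (t - c) ⟨by linarith [hcI.2], by linarith [hcI.1]⟩
        (t - s) ⟨by linarith [hsI.2], by linarith [hsI.1]⟩ u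
      have he3 : |(t - s) - (t - c)| = |c - s| := by
        rw [show (t - s) - (t - c) = -(s - c) by ring, abs_neg, abs_sub_comm]
      rw [he3] at h1
      refine le_trans h1 ?_
      refine mul_le_mul_of_nonneg_left hcd (by positivity)
    calc |σ - s| * |G.lap (P (t - s) f) w - G.lap (P (t - c) f) w|
        ≤ |σ - s| * (2 * D0 * (2 * D0 * MP * |σ - s|)) :=
          mul_le_mul_of_nonneg_left hlapdiff (abs_nonneg _)
      _ = CT * (|σ - s| * |σ - s|) := by rw [hCTdef]; ring
      _ = CT * (σ - s)^2 := by rw [abs_mul_abs_self]; ring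
  have hL_bd : ∀ s ∈ Set.Icc (0:ℝ) t, ∀ w, |G.lap (P (t - s) f) w| ≤ 2 * D0 * MP := by
    intro s hs w
    exact G.lap_abs_le hdeg
      (fun u => hMP (t - s) ⟨by linarith [hs.2], by linarith [hs.1]⟩ u) w
  have huLip : ∀ s ∈ Set.Icc (0:ℝ) t, ∀ σ ∈ Set.Icc (0:ℝ) t, ∀ w,
      |P (t - σ) f w - P (t - s) f w| ≤ (2 * D0 * MP) * |σ - s| := by
    intro s hs σ hσ w
    have h1 := hPLip (t - s) ⟨by linarith [hs.2], by linarith [hs.1]⟩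
      (t - σ) ⟨by linarith [hσ.2], by linarith [hσ.1]⟩ w
    have he3 : |(t - σ) - (t - s)| = |σ - s| := by
      rw [show (t - σ) - (t - s) = -(σ - s) by ring, abs_neg]
    rw [he3] at h1
    exact h1
  -- ====== g-Taylor and g-Lip ======
  set CE : ℝ := D0 * (4 * CT * MP + 8 * D0^2 * MP^2) with hCEdef
  have hCEnn : 0 ≤ CE := by rw [hCEdef]; positivity
  have hgtay : ∀ s ∈ Set.Ioo (0:ℝ) t, ∀ σ ∈ Set.Ioo (0:ℝ) t, ∀ y,
      |G.gamma (P (t - σ) f) y - G.gamma (P (t - s) f) y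
        - (σ - s) * ((-2) * G.gammaB (P (t - s) f) (G.lap (P (t - s) f)) y)|
        ≤ CE * (σ - s)^2 := by
    intro s hs σ hσ y
    have hsI : s ∈ Set.Icc (0:ℝ) t := ⟨hs.1.le, hs.2.le⟩
    have hσI : σ ∈ Set.Icc (0:ℝ) t := ⟨hσ.1.le, hσ.2.le⟩
    have h1 := G.gamma_taylor hdeg (P (t - s) f) (P (t - σ) f) (G.lap (P (t - s) f))
      (σ - s) MP (2 * D0 * MP) (CT * (σ - s)^2) ((2 * D0 * MP) * |σ - s|)
      hMPnn (by positivity) (by positivity) (by positivity)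
      (fun w => hMP (t - s) ⟨by linarith [hsI.2], by linarith [hsI.1]⟩ w)
      (fun w => hMP (t - σ) ⟨by linarith [hσI.2], by linarith [hσI.1]⟩ w)
      (hL_bd s hsI)
      (fun w => hutay s hs σ hσ w)
      (fun w => huLip s hsI σ hσI w) y
    have e : G.gamma (P (t - σ) f) y - G.gamma (P (t - s) f) y
        - (σ - s) * ((-2) * G.gammaB (P (t - s) f) (G.lap (P (t - s) f)) y)
        = G.gamma (P (t - σ) f) y - G.gamma (P (t - s) f) y
          + 2 * (σ - s) * G.gammaB (P (t - s) f) (G.lap (P (t - s) f)) y := by ring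
    rw [e]
    refine le_trans h1 (le_of_eq ?_)
    have habs : |σ - s| * |σ - s| = (σ - s)^2 := by rw [abs_mul_abs_self]; ring
    calc D0 * (4 * (CT * (σ - s)^2) * MP
          + 2 * |σ - s| * (2 * D0 * MP) * ((2 * D0 * MP) * |σ - s|))
        = D0 * (4 * CT * MP) * (σ - s)^2
          + D0 * (8 * D0^2 * MP^2) * (|σ - s| * |σ - s|) := by ring
      _ = CE * (σ - s)^2 := by rw [habs, hCEdef]; ring
  set CLg : ℝ := 8 * D0^2 * MP^2 with hCLgdef
  have hCLgnn : 0 ≤ CLg := by rw [hCLgdef]; positivity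
  have hglip : ∀ s ∈ Set.Icc (0:ℝ) t, ∀ σ ∈ Set.Icc (0:ℝ) t, ∀ y,
      |G.gamma (P (t - σ) f) y - G.gamma (P (t - s) f) y| ≤ CLg * |σ - s| := by
    intro s hs σ hσ y
    have h1 := G.gamma_taylor hdeg (P (t - s) f) (P (t - σ) f) (fun _ => (0:ℝ))
      0 MP 0 ((2 * D0 * MP) * |σ - s|) ((2 * D0 * MP) * |σ - s|)
      hMPnn le_rfl (by positivity) (by positivity)
      (fun w => hMP (t - s) ⟨by linarith [hs.2], by linarith [hs.1]⟩ w)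
      (fun w => hMP (t - σ) ⟨by linarith [hσ.2], by linarith [hσ.1]⟩ w)
      (fun w => by norm_num)
      (fun w => by simpa using huLip s hs σ hσ w)
      (fun w => huLip s hs σ hσ w) y
    have e : G.gamma (P (t - σ) f) y - G.gamma (P (t - s) f) y
        + 2 * 0 * G.gammaB (P (t - s) f) (fun _ => (0:ℝ)) y
        = G.gamma (P (t - σ) f) y - G.gamma (P (t - s) f) y := by ring
    rw [e] at h1
    refine le_trans h1 (le_of_eq ?_)
    rw [hCLgdef]
    simp only [abs_zero]
    ring
  -- ====== rho lower bound ======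
  obtain ⟨CQ10, hCQ10⟩ := hQbdd (fun _ : V => (1:ℝ)) hBone 1 zero_le_one
  set CQ1 : ℝ := max CQ10 1 with hCQ1def
  have hCQ1 : ∀ y, Q 1 (fun _ : V => (1:ℝ)) y ≤ CQ1 :=
    fun y => le_trans (le_abs_self _) (le_trans (hCQ10 y) (le_max_left _ _))
  have hCQ1pos : (0:ℝ) < CQ1 := lt_of_lt_of_le one_pos (le_max_right _ _)
  have hQone_nn : ∀ r, 0 ≤ r → ∀ y, 0 ≤ Q r (fun _ : V => (1:ℝ)) y :=
    fun r hr y => hQpos _ hBone (fun z => by norm_num) r hr y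
  set R0 : ℝ := max ((D0 + Real.log CQ1) / 2) 0 with hR0def
  have hR0nn : 0 ≤ R0 := le_max_right _ _
  have hρlb : ∀ y, -R0 ≤ ρ y := by
    intro y
    have hgr := gronwall_ge (φ := fun σ => Q σ (fun _ : V => (1:ℝ)) y)
      (d := fun σ => G.lap (Q σ (fun _ : V => (1:ℝ))) y
        - 2 * ρ y * Q σ (fun _ : V => (1:ℝ)) y)
      (κ := D0 + 2 * ρ y) zero_le_one
      ((hQcont _ hBone y).mono (fun σ hσ => hσ.1))
      (fun σ hσ => hQd _ hBone y σ hσ.1) ?_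
    · simp only [hQz, mul_zero, mul_one, Real.exp_zero, one_mul] at hgr
      -- hgr : 1 ≤ exp (D0 + 2 ρ y) * Q 1 one y
      have h2 : (1:ℝ) ≤ Real.exp (D0 + 2 * ρ y) * CQ1 :=
        le_trans hgr (mul_le_mul_of_nonneg_left (hCQ1 y) (Real.exp_pos _).le)
      have h4 := mul_le_mul_of_nonneg_left h2 (Real.exp_pos (-(D0 + 2 * ρ y))).le
      rw [mul_one, ← mul_assoc, ← Real.exp_add, neg_add_cancel, Real.exp_zero, one_mul] at h4
      have h5 : -(D0 + 2 * ρ y) ≤ Real.log CQ1 := (Real.le_log_iff_exp_le hCQ1pos).mpr h4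
      have h6 : (D0 + Real.log CQ1) / 2 ≤ R0 := le_max_left _ _
      rw [hR0def]
      linarith
    · intro σ hσ
      have h0σ : 0 ≤ σ := hσ.1.le
      have h2 := G.neg_deg_le_lap (fun u => hQone_nn σ h0σ u) y
      have h3 : G.deg y * Q σ (fun _ : V => (1:ℝ)) y ≤ D0 * Q σ (fun _ : V => (1:ℝ)) y :=
        mul_le_mul_of_nonneg_right (hdeg y) (hQone_nn σ h0σ y)
      show -((D0 + 2 * ρ y) * Q σ (fun _ : V => (1:ℝ)) y)
        ≤ G.lap (Q σ (fun _ : V => (1:ℝ))) y - 2 * ρ y * Q σ (fun _ : V => (1:ℝ)) y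
      linarith
  -- ====== rho upper bound at non-isolated vertices ======
  have hρub : ∀ y, 0 < G.deg y → ρ y ≤ 9 * D0 := by
    intro y hdy
    set f0 : V → ℝ := fun z => if z = y then (1:ℝ) else 0 with hf0def
    have hf0vals : ∀ z, f0 z = 0 ∨ f0 z = 1 := by
      intro z; by_cases h : z = y <;> simp [hf0def, h]
    have hf0y : f0 y = 1 := by simp [hf0def]
    have hf0abs : ∀ z, |f0 z| ≤ 1 := by
      intro z; rcases hf0vals z with h | h <;> rw [h] <;> norm_num
    have hBf0 : Bdd f0 := ⟨1, hf0abs⟩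
    have hγy : G.gamma f0 y = (1/2) * G.deg y := by
      rw [G.gamma_eq_sum]
      have hcongr : ∀ z ∈ G.nbr y, G.q y z * (f0 z - f0 y)^2 = G.q y z := by
        intro z hz
        have hzy : z ≠ y := by
          intro he
          have := (G.mem_nbr).mp hz
          rw [he, G.loopless] at this
          exact this rfl
        have hz0 : f0 z = 0 := by simp [hf0def, hzy]
        rw [hz0, hf0y]
        norm_num
      rw [Finset.sum_congr rfl hcongr, ← G.deg_eq_sum]
    have hγbd : ∀ u, G.gamma f0 u ≤ D0 / 2 := by
      intro u
      rw [G.gamma_eq_sum]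
      calc (1/2) * ∑ z ∈ G.nbr u, G.q u z * (f0 z - f0 u)^2
          ≤ (1/2) * ∑ z ∈ G.nbr u, G.q u z * 1 := by
            refine mul_le_mul_of_nonneg_left (Finset.sum_le_sum fun z _ => ?_) (by norm_num)
            refine mul_le_mul_of_nonneg_left ?_ (G.q_nonneg_s7 u z)
            rcases hf0vals z with h1 | h1 <;> rcases hf0vals u with h2 | h2 <;>
              rw [h1, h2] <;> norm_num
        _ = (1/2) * G.deg u := by simp only [mul_one]; rw [← G.deg_eq_sum]
        _ ≤ D0 / 2 := by linarith [hdeg u]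
    have hlapγ : G.lap (G.gamma f0) y ≤ G.deg y * (D0 / 2) :=
      G.lap_le_deg hγbd (G.gamma_nonneg' f0 y)
    have hlapf0 : ∀ u, |G.lap f0 u| ≤ 2 * D0 * 1 := fun u => G.lap_abs_le hdeg hf0abs u
    have hγB : |G.gammaB f0 (G.lap f0) y| ≤ G.deg y * (2 * (1 * (2 * D0 * 1))) :=
      G.gammaB_abs_le_deg hf0abs hlapf0 y
    have hcd := hCD f0 hBf0 y
    have hg2eq : G.gamma2 f0 y
        = (1/2) * G.lap (G.gamma f0) y - G.gammaB f0 (G.lap f0) y := rfl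
    rw [hg2eq, hγy] at hcd
    have hcnn : 0 ≤ (n⁻¹).toReal * (G.lap f0 y)^2 :=
      mul_nonneg ENNReal.toReal_nonneg (sq_nonneg _)
    have hγBlb : -(G.deg y * (2 * (1 * (2 * D0 * 1)))) ≤ G.gammaB f0 (G.lap f0) y := by
      have := neg_abs_le (G.gammaB f0 (G.lap f0) y)
      linarith [abs_le.mp hγB]
    nlinarith [mul_nonneg hD0 hdy.le, hdy]
  set Bρ : ℝ := max R0 (9 * D0) with hBρdef
  have hBρnn : 0 ≤ Bρ := le_trans hR0nn (le_max_left _ _)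
  have hρbd : ∀ y, 0 < G.deg y → |ρ y| ≤ Bρ := by
    intro y hdy
    rw [abs_le]
    constructor
    · have h1 := hρlb y
      have h2 : R0 ≤ Bρ := le_max_left _ _
      linarith
    · exact le_trans (hρub y hdy) (le_max_right _ _)
  have hρlb' : ∀ y, -Bρ ≤ ρ y := by
    intro y
    have h2 : R0 ≤ Bρ := le_max_left _ _
    linarith [hρlb y]
  -- ====== KQ uniform bound for Q ======
  obtain ⟨CQt0, hCQt0⟩ := hQbdd (fun _ : V => (1:ℝ)) hBone t ht
  set CQt : ℝ := max CQt0 0 with hCQtdef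
  have hCQt : ∀ y, Q t (fun _ : V => (1:ℝ)) y ≤ CQt :=
    fun y => le_trans (le_abs_self _) (le_trans (hCQt0 y) (le_max_left _ _))
  set KQ : ℝ := max (Real.exp ((D0 + 2 * Bρ) * t) * CQt) (Real.exp (2 * Bρ * t)) with hKQdef
  have hKQnn : 0 ≤ KQ := le_trans (Real.exp_pos _).le (le_max_right _ _)
  have hQ1bd : ∀ r ∈ Set.Icc (0:ℝ) t, ∀ z, Q r (fun _ : V => (1:ℝ)) z ≤ KQ := by
    intro r hr z
    rcases (G.deg_nonneg' z).lt_or_eq with hdz | hdz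
    · have hgr := gronwall_ge (φ := fun σ => Q σ (fun _ : V => (1:ℝ)) z)
        (d := fun σ => G.lap (Q σ (fun _ : V => (1:ℝ))) z
          - 2 * ρ z * Q σ (fun _ : V => (1:ℝ)) z)
        (κ := D0 + 2 * Bρ) hr.2
        ((hQcont _ hBone z).mono (fun σ hσ => le_trans hr.1 hσ.1))
        (fun σ hσ => hQd _ hBone z σ (lt_of_le_of_lt hr.1 hσ.1)) ?_
      · calc Q r (fun _ : V => (1:ℝ)) z
            ≤ Real.exp ((D0 + 2 * Bρ) * r) * Q r (fun _ : V => (1:ℝ)) z :=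
              le_mul_of_one_le_left (hQone_nn r hr.1 z)
                (Real.one_le_exp (mul_nonneg (by linarith) hr.1))
          _ ≤ Real.exp ((D0 + 2 * Bρ) * t) * Q t (fun _ : V => (1:ℝ)) z := hgr
          _ ≤ Real.exp ((D0 + 2 * Bρ) * t) * CQt :=
              mul_le_mul_of_nonneg_left (hCQt z) (Real.exp_pos _).le
          _ ≤ KQ := le_max_left _ _
      · intro σ hσ
        have h0σ : 0 ≤ σ := le_trans hr.1 hσ.1.le
        have h2 := G.neg_deg_le_lap (fun u => hQone_nn σ h0σ u) z
        have h3 : G.deg z * Q σ (fun _ : V => (1:ℝ)) z ≤ D0 * Q σ (fun _ : V => (1:ℝ)) z :=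
          mul_le_mul_of_nonneg_right (hdeg z) (hQone_nn σ h0σ z)
        have h4 : ρ z * Q σ (fun _ : V => (1:ℝ)) z ≤ Bρ * Q σ (fun _ : V => (1:ℝ)) z :=
          mul_le_mul_of_nonneg_right (abs_le.mp (hρbd z hdz)).2 (hQone_nn σ h0σ z)
        show -((D0 + 2 * Bρ) * Q σ (fun _ : V => (1:ℝ)) z)
          ≤ G.lap (Q σ (fun _ : V => (1:ℝ))) z - 2 * ρ z * Q σ (fun _ : V => (1:ℝ)) z
        linarith
    · have hgr := gronwall_le (φ := fun σ => Q σ (fun _ : V => (1:ℝ)) z)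
        (d := fun σ => G.lap (Q σ (fun _ : V => (1:ℝ))) z
          - 2 * ρ z * Q σ (fun _ : V => (1:ℝ)) z)
        (κ := 2 * Bρ) hr.1
        ((hQcont _ hBone z).mono (fun σ hσ => hσ.1))
        (fun σ hσ => hQd _ hBone z σ hσ.1) ?_
      · simp only [hQz, mul_zero, neg_zero, Real.exp_zero, one_mul] at hgr
        -- hgr : exp (-(2Bρ*r)) * Q r one z ≤ 1
        have h6 := mul_le_mul_of_nonneg_left hgr (Real.exp_pos (2 * Bρ * r)).le
        rw [← mul_assoc, ← Real.exp_add, add_neg_cancel, Real.exp_zero, one_mul, mul_one] at h6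
        refine le_trans h6 (le_trans ?_ (le_max_right _ _))
        exact Real.exp_le_exp.mpr (by nlinarith [hr.2, hBρnn, hr.1])
      · intro σ hσ
        have h0σ : 0 ≤ σ := hσ.1.le
        show G.lap (Q σ (fun _ : V => (1:ℝ))) z - 2 * ρ z * Q σ (fun _ : V => (1:ℝ)) z
          ≤ 2 * Bρ * Q σ (fun _ : V => (1:ℝ)) z
        rw [G.lap_eq_zero_of_deg_eq_zero hdz.symm]
        have h4 : (-ρ z) * Q σ (fun _ : V => (1:ℝ)) z ≤ Bρ * Q σ (fun _ : V => (1:ℝ)) z :=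
          mul_le_mul_of_nonneg_right (by linarith [hρlb' z]) (hQone_nn σ h0σ z)
        nlinarith
  have hQabs : ∀ r ∈ Set.Icc (0:ℝ) t, ∀ (a : V → ℝ) (C : ℝ), Bdd a → (∀ y, |a y| ≤ C) →
      ∀ z, |Q r a z| ≤ C * KQ := by
    intro r hr a C hBa hCa z
    have hC0 : 0 ≤ C := le_trans (abs_nonneg _) (hCa z)
    calc |Q r a z| ≤ C * Q r (fun _ : V => (1:ℝ)) z := sg_abs_le hQ hr.1 hBa hCa z
      _ ≤ C * KQ := mul_le_mul_of_nonneg_left (hQ1bd r hr z) hC0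
  -- ====== isolated vertices are invariant for Q ======
  have hQiso0 : ∀ z, G.deg z = 0 → ∀ (a : V → ℝ), Bdd a → a z = 0 →
      ∀ r, 0 ≤ r → Q r a z = 0 := by
    intro z hz a hBa haz r hr
    rcases eq_or_lt_of_le hr with h0 | h0
    · rw [← h0, hQz, haz]
    have hge := gronwall_ge (φ := fun σ => Q σ a z)
      (d := fun σ => G.lap (Q σ a) z - 2 * ρ z * Q σ a z) (κ := 2 * ρ z) hr
      ((hQcont a hBa z).mono (fun τ hτ => hτ.1))
      (fun τ hτ => hQd a hBa z τ hτ.1)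
      (fun τ hτ => by
        show -(2 * ρ z * Q τ a z) ≤ G.lap (Q τ a) z - 2 * ρ z * Q τ a z
        rw [G.lap_eq_zero_of_deg_eq_zero hz]
        exact le_of_eq (by ring))
    have hle := gronwall_le (φ := fun σ => Q σ a z)
      (d := fun σ => G.lap (Q σ a) z - 2 * ρ z * Q σ a z) (κ := -(2 * ρ z)) hr
      ((hQcont a hBa z).mono (fun τ hτ => hτ.1))
      (fun τ hτ => hQd a hBa z τ hτ.1)
      (fun τ hτ => by
        show G.lap (Q τ a) z - 2 * ρ z * Q τ a z ≤ -(2 * ρ z) * Q τ a z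
        rw [G.lap_eq_zero_of_deg_eq_zero hz]
        exact le_of_eq (by ring))
    simp only [hQz, haz, mul_zero, neg_zero, neg_mul, neg_neg, Real.exp_zero,
      one_mul, mul_one] at hge hle
    -- hge : 0 ≤ exp (2 ρ z r) * Q r a z ; hle : exp (2 ρ z r) * Q r a z ≤ 0
    have heq0 : Real.exp (2 * ρ z * r) * Q r a z = 0 := le_antisymm hle hge
    exact (mul_eq_zero.mp heq0).resolve_left (Real.exp_ne_zero _)
  -- ====== commutation Q_s ∘ A = A ∘ Q_s at x ======
  have hcomm : ∀ (a : V → ℝ) (Ca : ℝ), (∀ y, |a y| ≤ Ca) → (∀ z, G.deg z = 0 → a z = 0) →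
      ∀ s ∈ Set.Ioo (0:ℝ) t,
      G.lap (Q s a) x - 2 * ρ x * Q s a x
        = Q s (fun y => G.lap a y - 2 * ρ y * a y) x := by
    intro a Ca hCa hiso s hs
    have hBa : Bdd a := ⟨Ca, hCa⟩
    have hCa0 : 0 ≤ Ca := le_trans (abs_nonneg _) (hCa x)
    have hAabd : ∀ y, |G.lap a y - 2 * ρ y * a y| ≤ (2 * D0 + 2 * Bρ) * Ca := by
      intro y
      rcases (G.deg_nonneg' y).lt_or_eq with hdy | hdy
      · have h1 := G.lap_abs_le hdeg hCa y
        have h2 := hρbd y hdy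
        have h3 : |2 * ρ y * a y| ≤ 2 * Bρ * Ca := by
          rw [abs_mul, abs_mul, abs_two]
          have := mul_le_mul (mul_le_mul_of_nonneg_left h2 (by norm_num : (0:ℝ) ≤ 2))
            (hCa y) (abs_nonneg _) (by positivity)
          linarith
        calc |G.lap a y - 2 * ρ y * a y| ≤ |G.lap a y| + |2 * ρ y * a y| := abs_sub _ _
          _ ≤ 2 * D0 * Ca + 2 * Bρ * Ca := add_le_add h1 h3
          _ = (2 * D0 + 2 * Bρ) * Ca := by ring
      · rw [G.lap_eq_zero_of_deg_eq_zero hdy.symm, hiso y hdy.symm]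
        simp only [mul_zero, sub_zero, abs_zero]
        positivity
    have hBAa : Bdd (fun y => G.lap a y - 2 * ρ y * a y) := ⟨_, hAabd⟩
    -- Claim A : short-time continuity bound, uniform in the vertex
    have hclaimA : ∀ r ∈ Set.Icc (0:ℝ) t, ∀ z,
        |Q r a z - a z| ≤ ((2 * D0 + 2 * Bρ) * (Ca * KQ)) * r := by
      intro r hr z
      have hCnn : 0 ≤ (2 * D0 + 2 * Bρ) * (Ca * KQ) := by positivity
      rcases (G.deg_nonneg' z).lt_or_eq with hdz | hdz
      · rcases eq_or_lt_of_le hr.1 with h0 | h0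
        · rw [← h0, hQz]
          simp
        obtain ⟨c, hc, hceq⟩ := exists_hasDerivAt_eq_slope (fun τ => Q τ a z)
          (fun τ => G.lap (Q τ a) z - 2 * ρ z * Q τ a z) h0
          ((hQcont a hBa z).mono (fun τ hτ => hτ.1))
          (fun τ hτ => hQd a hBa z τ hτ.1)
        have hcI : c ∈ Set.Icc (0:ℝ) t := ⟨hc.1.le, le_trans hc.2.le hr.2⟩
        have heq : Q r a z - a z = (G.lap (Q c a) z - 2 * ρ z * Q c a z) * r := by
          rw [hceq, hQz, sub_zero, div_mul_cancel₀ _ (ne_of_gt h0)]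
        rw [heq, abs_mul, abs_of_nonneg hr.1]
        refine mul_le_mul_of_nonneg_right ?_ hr.1
        have h1 : |G.lap (Q c a) z| ≤ 2 * D0 * (Ca * KQ) :=
          G.lap_abs_le hdeg (fun u => hQabs c hcI a Ca hBa hCa u) z
        have h2 : |2 * ρ z * Q c a z| ≤ 2 * Bρ * (Ca * KQ) := by
          rw [abs_mul, abs_mul, abs_two]
          have := mul_le_mul (mul_le_mul_of_nonneg_left (hρbd z hdz) (by norm_num : (0:ℝ) ≤ 2))
            (hQabs c hcI a Ca hBa hCa z) (abs_nonneg _) (by positivity)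
          linarith
        calc |G.lap (Q c a) z - 2 * ρ z * Q c a z|
            ≤ |G.lap (Q c a) z| + |2 * ρ z * Q c a z| := abs_sub _ _
          _ ≤ 2 * D0 * (Ca * KQ) + 2 * Bρ * (Ca * KQ) := add_le_add h1 h2
          _ = (2 * D0 + 2 * Bρ) * (Ca * KQ) := by ring
      · rw [hQiso0 z hdz.symm a hBa (hiso z hdz.symm) r hr.1, hiso z hdz.symm]
        simpa using mul_nonneg hCnn hr.1
    -- short time Taylor estimate
    have hST : ∀ h : ℝ, 0 < h → h ≤ t → ∀ z,
        |Q h a z - a z - h * (G.lap a z - 2 * ρ z * a z)|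
          ≤ ((2 * D0 + 2 * Bρ) * ((2 * D0 + 2 * Bρ) * (Ca * KQ))) * h^2 := by
      intro h hh0 hht z
      rcases (G.deg_nonneg' z).lt_or_eq with hdz | hdz
      · obtain ⟨c, hc, hceq⟩ := exists_hasDerivAt_eq_slope (fun τ => Q τ a z)
          (fun τ => G.lap (Q τ a) z - 2 * ρ z * Q τ a z) hh0
          ((hQcont a hBa z).mono (fun τ hτ => hτ.1))
          (fun τ hτ => hQd a hBa z τ hτ.1)
        have heq : Q h a z - a z = (G.lap (Q c a) z - 2 * ρ z * Q c a z) * h := by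
          rw [hceq, hQz, sub_zero, div_mul_cancel₀ _ (ne_of_gt hh0)]
        have e2 : Q h a z - a z - h * (G.lap a z - 2 * ρ z * a z)
            = h * ((G.lap (Q c a) z - G.lap a z) - 2 * ρ z * (Q c a z - a z)) := by
          rw [heq]; ring
        rw [e2, abs_mul, abs_of_pos hh0]
        have hdif : ∀ u, |Q c a u - a u| ≤ ((2 * D0 + 2 * Bρ) * (Ca * KQ)) * h := by
          intro u
          refine le_trans (hclaimA c ⟨hc.1.le, le_trans hc.2.le hht⟩ u) ?_
          exact mul_le_mul_of_nonneg_left hc.2.le (by positivity)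
        have h1 : |G.lap (Q c a) z - G.lap a z|
            ≤ 2 * D0 * (((2 * D0 + 2 * Bρ) * (Ca * KQ)) * h) := by
          rw [G.lap_sub_pt]
          exact G.lap_abs_le hdeg hdif z
        have h2 : |2 * ρ z * (Q c a z - a z)|
            ≤ 2 * Bρ * (((2 * D0 + 2 * Bρ) * (Ca * KQ)) * h) := by
          rw [abs_mul, abs_mul, abs_two]
          have := mul_le_mul (mul_le_mul_of_nonneg_left (hρbd z hdz) (by norm_num : (0:ℝ) ≤ 2))
            (hdif z) (abs_nonneg _) (by positivity)
          linarith
        calc h * |(G.lap (Q c a) z - G.lap a z) - 2 * ρ z * (Q c a z - a z)|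
            ≤ h * (2 * D0 * (((2 * D0 + 2 * Bρ) * (Ca * KQ)) * h)
                + 2 * Bρ * (((2 * D0 + 2 * Bρ) * (Ca * KQ)) * h)) := by
              refine mul_le_mul_of_nonneg_left ?_ hh0.le
              exact le_trans (abs_sub _ _) (add_le_add h1 h2)
          _ = ((2 * D0 + 2 * Bρ) * ((2 * D0 + 2 * Bρ) * (Ca * KQ))) * h^2 := by ring
      · rw [hQiso0 z hdz.symm a hBa (hiso z hdz.symm) h hh0.le, hiso z hdz.symm,
          G.lap_eq_zero_of_deg_eq_zero hdz.symm]
        simpa using mul_nonneg (by positivity :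
          (0:ℝ) ≤ (2 * D0 + 2 * Bρ) * ((2 * D0 + 2 * Bρ) * (Ca * KQ))) (sq_nonneg h)
    -- derivative from the right equals Q_s (A a) x
    have hL2 : HasDerivWithinAt (fun τ => Q τ a x)
        (Q s (fun y => G.lap a y - 2 * ρ y * a y) x) (Set.Ioi s) s := by
      rw [hasDerivWithinAt_iff_tendsto_slope' (by simp : s ∉ Set.Ioi s)]
      have hball : Set.Ioo s t ∈ nhdsWithin s (Set.Ioi s) :=
        Ioo_mem_nhdsGT_of_mem ⟨le_refl s, hs.2⟩
      have hsub : ∀ σ ∈ Set.Ioo s t,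
          |(Q σ a x - Q s a x) / (σ - s) - Q s (fun y => G.lap a y - 2 * ρ y * a y) x|
            ≤ (((2 * D0 + 2 * Bρ) * ((2 * D0 + 2 * Bρ) * (Ca * KQ))) * KQ) * (σ - s) := by
        intro σ hσ
        have hσs : 0 < σ - s := by linarith [hσ.1]
        have hsg : Q σ a = Q s (Q (σ - s) a) := by
          have h1 := hQsg s (σ - s) hs.1.le hσs.le a
          rw [show s + (σ - s) = σ by ring] at h1
          exact h1
        have hWbd : ∀ z, |(Q (σ - s) a - a - (σ - s) • (fun y => G.lap a y - 2 * ρ y * a y)) z|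
            ≤ (((2 * D0 + 2 * Bρ) * ((2 * D0 + 2 * Bρ) * (Ca * KQ)))) * (σ - s)^2 := by
          intro z
          have := hST (σ - s) hσs (by linarith [hσ.2, hs.1]) z
          simpa [Pi.sub_apply, Pi.smul_apply, smul_eq_mul] using this
        have hBW : Bdd (Q (σ - s) a - a - (σ - s) • (fun y => G.lap a y - 2 * ρ y * a y)) :=
          ((hQbdd a hBa (σ - s) hσs.le).sub hBa).sub (Bdd.smul (σ - s) hBAa)
        have hq := hQabs s ⟨hs.1.le, hs.2.le⟩ _
          ((((2 * D0 + 2 * Bρ) * ((2 * D0 + 2 * Bρ) * (Ca * KQ)))) * (σ - s)^2)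
          hBW hWbd x
        have hkey : (Q σ a x - Q s a x) / (σ - s)
            - Q s (fun y => G.lap a y - 2 * ρ y * a y) x
            = Q s (Q (σ - s) a - a - (σ - s) • (fun y => G.lap a y - 2 * ρ y * a y)) x
              / (σ - s) := by
          rw [sg_sub_pt hQ, sg_sub_pt hQ, sg_smul_pt hQ, hsg]
          field_simp
          try ring
        rw [hkey, abs_div, abs_of_pos hσs, div_le_iff₀ hσs]
        calc |Q s (Q (σ - s) a - a - (σ - s) • (fun y => G.lap a y - 2 * ρ y * a y)) x|
            ≤ (((2 * D0 + 2 * Bρ) * ((2 * D0 + 2 * Bρ) * (Ca * KQ)))) * (σ - s)^2 * KQ := hq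
          _ = (((2 * D0 + 2 * Bρ) * ((2 * D0 + 2 * Bρ) * (Ca * KQ))) * KQ) * (σ - s) * (σ - s) := by
              ring
      have hslopeEq : ∀ σ : ℝ, slope (fun τ => Q τ a x) s σ = (Q σ a x - Q s a x) / (σ - s) :=
        fun σ => by rw [slope_def_field]
      have h0 : Filter.Tendsto
          (fun σ => (Q σ a x - Q s a x) / (σ - s)
            - Q s (fun y => G.lap a y - 2 * ρ y * a y) x)
          (nhdsWithin s (Set.Ioi s)) (nhds 0) := by
        rw [tendsto_zero_iff_norm_tendsto_zero]
        refine squeeze_zero'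
          (g := fun σ => (((2 * D0 + 2 * Bρ) * ((2 * D0 + 2 * Bρ) * (Ca * KQ))) * KQ) * (σ - s))
          (Filter.Eventually.of_forall fun σ => norm_nonneg _) ?_ ?_
        · filter_upwards [hball] with σ hσ
          rw [Real.norm_eq_abs]
          exact hsub σ hσ
        · have hco : Filter.Tendsto
              (fun σ : ℝ => (((2 * D0 + 2 * Bρ) * ((2 * D0 + 2 * Bρ) * (Ca * KQ))) * KQ) * (σ - s))
              (nhds s) (nhds ((((2 * D0 + 2 * Bρ) * ((2 * D0 + 2 * Bρ) * (Ca * KQ))) * KQ) * (s - s))) :=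
            Continuous.tendsto (continuous_const.mul (continuous_id.sub continuous_const)) s
          simpa using hco.mono_left nhdsWithin_le_nhds
      have h1 := h0.add (tendsto_const_nhds
        (x := Q s (fun y => G.lap a y - 2 * ρ y * a y) x))
      simp only [sub_add_cancel, zero_add] at h1
      refine Filter.Tendsto.congr' ?_ h1
      filter_upwards with σ
      exact (hslopeEq σ).symm
    have hL1 : HasDerivWithinAt (fun τ => Q τ a x)
        (G.lap (Q s a) x - 2 * ρ x * Q s a x) (Set.Ioi s) s :=
      (hQd a hBa x s hs.1).hasDerivWithinAt
    have e1 := hL1.derivWithin (uniqueDiffWithinAt_Ioi s)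
    have e2 := hL2.derivWithin (uniqueDiffWithinAt_Ioi s)
    rw [e1] at e2
    exact e2
  -- ====== bounds for g and gd ======
  set Cγ : ℝ := 2 * D0 * MP^2 with hCγdef
  have hCγnn : 0 ≤ Cγ := by rw [hCγdef]; positivity
  have hgbd : ∀ σ ∈ Set.Icc (0:ℝ) t, ∀ y, |G.gamma (P (t - σ) f) y| ≤ Cγ := by
    intro σ hσ y
    rw [abs_of_nonneg (G.gamma_nonneg' _ y)]
    exact G.gamma_le_of_bdd hdeg
      (fun u => hMP (t - σ) ⟨by linarith [hσ.2], by linarith [hσ.1]⟩ u) y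
  have hgiso : ∀ σ : ℝ, ∀ z, G.deg z = 0 → G.gamma (P (t - σ) f) z = 0 :=
    fun σ z hz => G.gamma_eq_zero_of_deg_eq_zero hz _
  set Cgd : ℝ := 2 * (D0 * (2 * (MP * (2 * D0 * MP)))) with hCgddef
  have hgdbd : ∀ s ∈ Set.Icc (0:ℝ) t, ∀ y,
      |(-2:ℝ) * G.gammaB (P (t - s) f) (G.lap (P (t - s) f)) y| ≤ Cgd := by
    intro s hs y
    rw [abs_mul]
    have h1 := G.gammaB_abs_le_deg
      (fun u => hMP (t - s) ⟨by linarith [hs.2], by linarith [hs.1]⟩ u) (hL_bd s hs) y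
    have h2 : G.deg y * (2 * (MP * (2 * D0 * MP))) ≤ D0 * (2 * (MP * (2 * D0 * MP))) :=
      mul_le_mul_of_nonneg_right (hdeg y) (by positivity)
    have h3 : |(-2:ℝ)| = 2 := by norm_num
    rw [h3, hCgddef]
    linarith
  -- ====== derivative of F ======
  have hFderiv : ∀ s ∈ Set.Ioo (0:ℝ) t,
      HasDerivAt (fun σ => Q σ (G.gamma (P (t - σ) f)) x)
        (Q s (fun y => (G.lap (G.gamma (P (t - s) f)) y - 2 * ρ y * G.gamma (P (t - s) f) y)
          + (-2) * G.gammaB (P (t - s) f) (G.lap (P (t - s) f)) y) x) s := by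
    intro s hs
    have hsI : s ∈ Set.Icc (0:ℝ) t := ⟨hs.1.le, hs.2.le⟩
    have hBgs : Bdd (G.gamma (P (t - s) f)) := ⟨Cγ, hgbd s hsI⟩
    have h1 : HasDerivAt (fun σ => Q σ (G.gamma (P (t - s) f)) x)
        (G.lap (Q s (G.gamma (P (t - s) f))) x - 2 * ρ x * Q s (G.gamma (P (t - s) f)) x) s :=
      hQd _ hBgs x s hs.1
    have hBgd : Bdd (fun y => (-2:ℝ) * G.gammaB (P (t - s) f) (G.lap (P (t - s) f)) y) :=
      ⟨Cgd, hgdbd s hsI⟩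
    have h2 : HasDerivAt
        (fun σ => Q σ (G.gamma (P (t - σ) f) - G.gamma (P (t - s) f)) x)
        (Q s (fun y => (-2:ℝ) * G.gammaB (P (t - s) f) (G.lap (P (t - s) f)) y) x) s := by
      rw [hasDerivAt_iff_tendsto_slope]
      have hev : Set.Ioo (0:ℝ) t ∈ nhdsWithin s {s}ᶜ :=
        mem_nhdsWithin_of_mem_nhds (isOpen_Ioo.mem_nhds hs)
      have hA : Filter.Tendsto
          (fun σ => Q σ (fun y => (-2:ℝ) * G.gammaB (P (t - s) f) (G.lap (P (t - s) f)) y) x)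
          (nhdsWithin s {s}ᶜ)
          (nhds (Q s (fun y => (-2:ℝ) * G.gammaB (P (t - s) f) (G.lap (P (t - s) f)) y) x)) := by
        have hc : ContinuousAt
            (fun σ => Q σ (fun y => (-2:ℝ) * G.gammaB (P (t - s) f) (G.lap (P (t - s) f)) y) x) s :=
          (hQcont _ hBgd x).continuousAt (Ici_mem_nhds hs.1)
        exact hc.tendsto.mono_left nhdsWithin_le_nhds
      have hB : Filter.Tendsto
          (fun σ => Q σ (G.gamma (P (t - σ) f) - G.gamma (P (t - s) f)
            - (σ - s) • (fun y => (-2:ℝ) * G.gammaB (P (t - s) f) (G.lap (P (t - s) f)) y)) x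
              / (σ - s))
          (nhdsWithin s {s}ᶜ) (nhds 0) := by
        rw [tendsto_zero_iff_norm_tendsto_zero]
        refine squeeze_zero' (g := fun σ => CE * KQ * |σ - s|)
          (Filter.Eventually.of_forall fun σ => norm_nonneg _) ?_ ?_
        · filter_upwards [hev, self_mem_nhdsWithin] with σ hσI hσne
          have hne : σ ≠ s := by simpa using hσne
          have hEbd : ∀ y, |(G.gamma (P (t - σ) f) - G.gamma (P (t - s) f)
              - (σ - s) • (fun y => (-2:ℝ) * G.gammaB (P (t - s) f) (G.lap (P (t - s) f)) y)) y|
              ≤ CE * (σ - s)^2 := by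
            intro y
            have := hgtay s hs σ hσI y
            simpa [Pi.sub_apply, Pi.smul_apply, smul_eq_mul] using this
          have hBE1 : Bdd (G.gamma (P (t - σ) f)) := ⟨Cγ, hgbd σ ⟨hσI.1.le, hσI.2.le⟩⟩
          have hBE : Bdd (G.gamma (P (t - σ) f) - G.gamma (P (t - s) f)
              - (σ - s) • (fun y => (-2:ℝ) * G.gammaB (P (t - s) f) (G.lap (P (t - s) f)) y)) :=
            (hBE1.sub hBgs).sub (Bdd.smul (σ - s) hBgd)
          have hq := hQabs σ ⟨hσI.1.le, hσI.2.le⟩ _ (CE * (σ - s)^2) hBE hEbd x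
          rw [Real.norm_eq_abs, abs_div]
          have hσs : (0:ℝ) < |σ - s| := abs_pos.mpr (sub_ne_zero.mpr hne)
          rw [div_le_iff₀ hσs]
          calc |Q σ (G.gamma (P (t - σ) f) - G.gamma (P (t - s) f)
                - (σ - s) • (fun y => (-2:ℝ) * G.gammaB (P (t - s) f) (G.lap (P (t - s) f)) y)) x|
              ≤ CE * (σ - s)^2 * KQ := hq
            _ = (CE * KQ) * (|σ - s| * |σ - s|) := by rw [abs_mul_abs_self]; ring
            _ = CE * KQ * |σ - s| * |σ - s| := by ring
        · have hco : Filter.Tendsto (fun σ : ℝ => CE * KQ * |σ - s|)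
              (nhds s) (nhds (CE * KQ * |s - s|)) :=
            Continuous.tendsto (continuous_const.mul (continuous_id.sub continuous_const).abs) s
          simpa using hco.mono_left nhdsWithin_le_nhds
      have hsum := hA.add hB
      rw [add_zero] at hsum
      refine Filter.Tendsto.congr' ?_ hsum
      filter_upwards [self_mem_nhdsWithin] with σ hσne
      have hne : σ ≠ s := by simpa using hσne
      have hnes : σ - s ≠ 0 := sub_ne_zero.mpr hne
      have hz0 : Q s (G.gamma (P (t - s) f) - G.gamma (P (t - s) f)) x = 0 := by
        rw [sub_self, sg_zero hQ]
        rfl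
      rw [slope_def_field, hz0, sub_zero]
      have hdecomp : Q σ (G.gamma (P (t - σ) f) - G.gamma (P (t - s) f)) x
          = (σ - s) * Q σ (fun y => (-2:ℝ) * G.gammaB (P (t - s) f) (G.lap (P (t - s) f)) y) x
            + Q σ (G.gamma (P (t - σ) f) - G.gamma (P (t - s) f)
              - (σ - s) • (fun y => (-2:ℝ) * G.gammaB (P (t - s) f) (G.lap (P (t - s) f)) y)) x := by
        have hsplit := sg_add_pt hQ σ
          ((σ - s) • (fun y => (-2:ℝ) * G.gammaB (P (t - s) f) (G.lap (P (t - s) f)) y))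
          (G.gamma (P (t - σ) f) - G.gamma (P (t - s) f)
            - (σ - s) • (fun y => (-2:ℝ) * G.gammaB (P (t - s) f) (G.lap (P (t - s) f)) y)) x
        have e2 : (σ - s) • (fun y => (-2:ℝ) * G.gammaB (P (t - s) f) (G.lap (P (t - s) f)) y)
            + (G.gamma (P (t - σ) f) - G.gamma (P (t - s) f)
              - (σ - s) • (fun y => (-2:ℝ) * G.gammaB (P (t - s) f) (G.lap (P (t - s) f)) y))
            = G.gamma (P (t - σ) f) - G.gamma (P (t - s) f) := by abel
        rw [e2] at hsplit
        rw [hsplit, sg_smul_pt hQ]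
      rw [hdecomp]
      field_simp
      try ring
    have hsum := h1.add h2
    have hfun : (fun σ => Q σ (G.gamma (P (t - s) f)) x
        + Q σ (G.gamma (P (t - σ) f) - G.gamma (P (t - s) f)) x)
        = (fun σ => Q σ (G.gamma (P (t - σ) f)) x) := by
      funext σ
      rw [sg_sub_pt hQ]
      ring
    simp only [Pi.add_def] at hsum
    rw [hfun] at hsum
    have hcm := hcomm (G.gamma (P (t - s) f)) Cγ (hgbd s hsI) (fun z hz => hgiso s z hz) s hs
    rw [hcm] at hsum
    have hval : Q s (fun y => G.lap (G.gamma (P (t - s) f)) y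
          - 2 * ρ y * G.gamma (P (t - s) f) y) x
        + Q s (fun y => (-2:ℝ) * G.gammaB (P (t - s) f) (G.lap (P (t - s) f)) y) x
        = Q s (fun y => (G.lap (G.gamma (P (t - s) f)) y - 2 * ρ y * G.gamma (P (t - s) f) y)
          + (-2) * G.gammaB (P (t - s) f) (G.lap (P (t - s) f)) y) x := by
      rw [← sg_add_pt hQ]
      rfl
    rw [hval] at hsum
    exact hsum
  -- ====== nonnegativity of the derivative ======
  have hF'pos : ∀ s ∈ Set.Ioo (0:ℝ) t,
      0 ≤ Q s (fun y => (G.lap (G.gamma (P (t - s) f)) y - 2 * ρ y * G.gamma (P (t - s) f) y)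
        + (-2) * G.gammaB (P (t - s) f) (G.lap (P (t - s) f)) y) x := by
    intro s hs
    have hsI : s ∈ Set.Icc (0:ℝ) t := ⟨hs.1.le, hs.2.le⟩
    have hAbd : ∀ y, |G.lap (G.gamma (P (t - s) f)) y - 2 * ρ y * G.gamma (P (t - s) f) y|
        ≤ (2 * D0 + 2 * Bρ) * Cγ := by
      intro y
      rcases (G.deg_nonneg' y).lt_or_eq with hdy | hdy
      · have h1 := G.lap_abs_le hdeg (hgbd s hsI) y
        have h3 : |2 * ρ y * G.gamma (P (t - s) f) y| ≤ 2 * Bρ * Cγ := by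
          rw [abs_mul, abs_mul, abs_two]
          have := mul_le_mul (mul_le_mul_of_nonneg_left (hρbd y hdy) (by norm_num : (0:ℝ) ≤ 2))
            (hgbd s hsI y) (abs_nonneg _) (by positivity)
          linarith
        calc |G.lap (G.gamma (P (t - s) f)) y - 2 * ρ y * G.gamma (P (t - s) f) y|
            ≤ |G.lap (G.gamma (P (t - s) f)) y| + |2 * ρ y * G.gamma (P (t - s) f) y| :=
              abs_sub _ _
          _ ≤ 2 * D0 * Cγ + 2 * Bρ * Cγ := add_le_add h1 h3
          _ = (2 * D0 + 2 * Bρ) * Cγ := by ring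
      · rw [G.lap_eq_zero_of_deg_eq_zero hdy.symm, hgiso s y hdy.symm]
        simp only [mul_zero, sub_zero, abs_zero]
        positivity
    refine hQpos _ ⟨(2 * D0 + 2 * Bρ) * Cγ + Cgd, fun y => ?_⟩ ?_ s hs.1.le x
    · calc |(G.lap (G.gamma (P (t - s) f)) y - 2 * ρ y * G.gamma (P (t - s) f) y)
            + (-2) * G.gammaB (P (t - s) f) (G.lap (P (t - s) f)) y|
          ≤ |G.lap (G.gamma (P (t - s) f)) y - 2 * ρ y * G.gamma (P (t - s) f) y|
            + |(-2:ℝ) * G.gammaB (P (t - s) f) (G.lap (P (t - s) f)) y| := abs_add_le _ _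
        _ ≤ (2 * D0 + 2 * Bρ) * Cγ + Cgd := add_le_add (hAbd y) (hgdbd s hsI y)
    · intro y
      show 0 ≤ (G.lap (G.gamma (P (t - s) f)) y - 2 * ρ y * G.gamma (P (t - s) f) y)
        + (-2) * G.gammaB (P (t - s) f) (G.lap (P (t - s) f)) y
      have hcd := hCD (P (t - s) f)
        ⟨MP, fun u => hMP (t - s) ⟨by linarith [hsI.2], by linarith [hsI.1]⟩ u⟩ y
      have hg2eq : G.gamma2 (P (t - s) f) y
          = (1/2) * G.lap (G.gamma (P (t - s) f)) y
            - G.gammaB (P (t - s) f) (G.lap (P (t - s) f)) y := rfl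
      rw [hg2eq] at hcd
      have hnn : 0 ≤ (n⁻¹).toReal * (G.lap (P (t - s) f) y)^2 :=
        mul_nonneg ENNReal.toReal_nonneg (sq_nonneg _)
      linarith
  -- ====== continuity of F on [0,t] ======
  have hFcont : ContinuousOn (fun σ => Q σ (G.gamma (P (t - σ) f)) x) (Set.Icc 0 t) := by
    intro σ0 hσ0
    have hBg0 : Bdd (G.gamma (P (t - σ0) f)) := ⟨Cγ, hgbd σ0 hσ0⟩
    have h1 : ContinuousWithinAt (fun σ => Q σ (G.gamma (P (t - σ0) f)) x) (Set.Icc 0 t) σ0 :=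
      ((hQcont _ hBg0 x).mono (fun σ hσ => hσ.1)) σ0 hσ0
    have h2 : Filter.Tendsto
        (fun σ => Q σ (G.gamma (P (t - σ) f) - G.gamma (P (t - σ0) f)) x)
        (nhdsWithin σ0 (Set.Icc 0 t)) (nhds 0) := by
      rw [tendsto_zero_iff_norm_tendsto_zero]
      refine squeeze_zero' (g := fun σ => (CLg * KQ) * |σ - σ0|)
        (Filter.Eventually.of_forall fun σ => norm_nonneg _) ?_ ?_
      · filter_upwards [self_mem_nhdsWithin] with σ hσ
        rw [Real.norm_eq_abs]
        have hEbd : ∀ y, |(G.gamma (P (t - σ) f) - G.gamma (P (t - σ0) f)) y|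
            ≤ CLg * |σ - σ0| := by
          intro y
          have := hglip σ0 hσ0 σ hσ y
          simpa [Pi.sub_apply] using this
        have hBE1 : Bdd (G.gamma (P (t - σ) f)) := ⟨Cγ, hgbd σ hσ⟩
        have hBE : Bdd (G.gamma (P (t - σ) f) - G.gamma (P (t - σ0) f)) :=
          hBE1.sub hBg0
        have := hQabs σ hσ _ (CLg * |σ - σ0|) hBE hEbd x
        calc |Q σ (G.gamma (P (t - σ) f) - G.gamma (P (t - σ0) f)) x|
            ≤ CLg * |σ - σ0| * KQ := this
          _ = (CLg * KQ) * |σ - σ0| := by ring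
      · have hco : Filter.Tendsto (fun σ : ℝ => (CLg * KQ) * |σ - σ0|)
            (nhds σ0) (nhds ((CLg * KQ) * |σ0 - σ0|)) :=
          Continuous.tendsto (continuous_const.mul (continuous_id.sub continuous_const).abs) σ0
        simpa using hco.mono_left nhdsWithin_le_nhds
    have h3 := Filter.Tendsto.add h1 h2
    rw [add_zero] at h3
    have h4 : (fun σ => Q σ (G.gamma (P (t - σ0) f)) x
        + Q σ (G.gamma (P (t - σ) f) - G.gamma (P (t - σ0) f)) x)
        = (fun σ => Q σ (G.gamma (P (t - σ) f)) x) := by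
      funext σ
      rw [sg_sub_pt hQ]
      ring
    rw [h4] at h3
    exact h3
  -- ====== conclusion via monotonicity ======
  have hdiff : DifferentiableOn ℝ (fun σ => Q σ (G.gamma (P (t - σ) f)) x)
      (interior (Set.Icc 0 t)) := by
    rw [interior_Icc]
    intro s hs
    exact (hFderiv s hs).differentiableAt.differentiableWithinAt
  have hder : ∀ s ∈ interior (Set.Icc (0:ℝ) t),
      0 ≤ deriv (fun σ => Q σ (G.gamma (P (t - σ) f)) x) s := by
    intro s hs
    rw [interior_Icc] at hs
    rw [(hFderiv s hs).deriv]
    exact hF'pos s hs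
  have hmono := monotoneOn_of_deriv_nonneg (convex_Icc 0 t) hFcont hdiff hder
  have hfin := hmono (Set.left_mem_Icc.mpr ht) (Set.right_mem_Icc.mpr ht) ht
  simp only [sub_zero, sub_self] at hfin
  rw [hQz, hPz] at hfin
  exact hfin
end
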